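/- arXiv:1505.03294 — 5 statements merged into one kernel-verified Lean document; each statement's English description precedes it below -/
import Mathlib

section
/- Let D_l = ⟨a, b | a² = b² = (ab)^l = 1⟩ be the dihedral group of order 2l with l ≥ 2, let ε₁, ε₂, ... be independent random variables uniform on {0,1}, and let Y_t = a^{ε₁} b^{ε₂} a^{ε₃} ⋯ (alternating, t factors). Let p_t(x) = P(d(Y_t, {e, a}) = x) for 0 ≤ x ≤ l−1, where d denotes word-metric distance in the Cayley graph of D_l with generators {a, b}. Then for every t ≥ 0, the sequence (p_t(0), p_t(1), ..., p_t(l−1)) is non-increasing in x. -/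
/-
Right multiplication by `a` or `b` moves an element of `D_l` along an edge of the Cayley graph,
a `2l`-cycle, so the number `c_t(p)` of sign sequences with `Y_t` at vertex `p` obeys
`c_{t+1}(p) = c_t(p) + c_t(σ_t p)`, where the involution `σ_t` follows the edges labelled by the
`(t+1)`-st generator. For `t ≥ 1`, `c_t(p)` is a non-increasing function of the distance from `p`
to the edge `{e, a}`: the reflection fixing that edge commutes with `σ_t`, which therefore pairs
off adjacent distance levels, and adding to an antitone function its composite with such a pairing
keeps it antitone. Finally `{Y | d(Y) = x}` is an `a`-edge of the cycle, and these edges move away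
from `{e, a}` as `x` grows.
-/

/-- Word length of `g` with respect to a set `S` of generators. -/
noncomputable def lengthWrt {G : Type*} [Group G] (S : Set G) (g : G) : ℕ :=
  sInf {n | ∃ L : List G, (∀ x ∈ L, x ∈ S) ∧ L.length = n ∧ L.prod = g}

/-- The generators `a = sr 0`, `b = sr 1` of the dihedral group. -/
def dihGens (l : ℕ) : Set (DihedralGroup l) := {DihedralGroup.sr 0, DihedralGroup.sr 1}

/-- The distance from `Y` to the edge `{e, a}` of the Cayley graph of `D_l`
with respect to `{a, b}`, namely `min(|Y|, |Y·a|)`. -/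
noncomputable def dEdge (l : ℕ) (Y : DihedralGroup l) : ℕ :=
  min (lengthWrt (dihGens l) Y) (lengthWrt (dihGens l) (Y * DihedralGroup.sr 0))

/-- The alternating random product `Y_t = a^{ε₁} b^{ε₂} a^{ε₃} ⋯` (t factors). -/
def altProd (l t : ℕ) (ε : Fin t → Bool) : DihedralGroup l :=
  ((List.finRange t).map (fun i =>
    if ε i then (if (i : ℕ) % 2 = 0 then DihedralGroup.sr 0 else DihedralGroup.sr 1)
    else 1)).prod

lemma ZMod.val_add_one_eq_ite {n : ℕ} [NeZero n] (a : ZMod n) :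
    (a + 1).val = if a.val + 1 = n then 0 else a.val + 1 := by
  obtain ⟨m, rfl⟩ := Nat.exists_eq_add_one_of_ne_zero (NeZero.ne n)
  revert a
  show ∀ a : Fin (m + 1), ((a + 1 : Fin (m + 1)) : ℕ) =
    if (a : ℕ) + 1 = m + 1 then 0 else (a : ℕ) + 1
  intro a
  rw [Fin.val_add_one]
  simp [Fin.ext_iff]

lemma ZMod.val_sub_one_eq_ite {n : ℕ} [NeZero n] (a : ZMod n) :
    (a - 1).val = if a.val = 0 then n - 1 else a.val - 1 := by
  obtain ⟨m, rfl⟩ := Nat.exists_eq_add_one_of_ne_zero (NeZero.ne n)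
  revert a
  show ∀ a : Fin (m + 1), ((a - 1 : Fin (m + 1)) : ℕ) =
    if (a : ℕ) = 0 then m + 1 - 1 else (a : ℕ) - 1
  intro a
  rw [Fin.coe_sub_one, Nat.add_sub_cancel]
  exact if_congr Fin.val_eq_zero_iff.symm rfl rfl

lemma Nat.card_subtype_eq_or_eq {α β : Type*} [Finite α] (f : α → β) {b c : β} (h : b ≠ c) :
    Nat.card {a // f a = b ∨ f a = c} = Nat.card {a // f a = b} + Nat.card {a // f a = c} := by
  classical
  refine (Nat.card_congr (subtypeOrEquiv _ _ ?_)).trans Nat.card_sum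
  simp only [Pi.disjoint_iff, Prop.disjoint_iff]
  exact fun a ⟨hb, hc⟩ => h (hb.symm.trans hc)

section WordLength

variable {G : Type*} [Group G] {S : Set G}

lemma lengthWrt_list_prod_le {L : List G} (hL : ∀ x ∈ L, x ∈ S) :
    lengthWrt S L.prod ≤ L.length :=
  Nat.sInf_le ⟨L, hL, rfl, rfl⟩

lemma apply_list_prod_le_length (f : G → ℕ) (h_one : f 1 = 0)
    (h_mul : ∀ g, ∀ s ∈ S, f (g * s) ≤ f g + 1) {L : List G} (hL : ∀ x ∈ L, x ∈ S) :
    f L.prod ≤ L.length := by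
  induction L using List.reverseRecOn with
  | nil => simp [h_one]
  | append_singleton L s ih =>
    simp only [List.mem_append, List.mem_singleton] at hL
    have h_last := h_mul L.prod s (hL s (Or.inr rfl))
    have h_init := ih fun x hx => hL x (Or.inl hx)
    simp only [List.prod_append, List.prod_singleton, List.length_append,
      List.length_singleton]
    omega

lemma exists_list_prod_eq_of_descent (f : G → ℕ)
    (h_desc : ∀ g ≠ 1, ∃ h, ∃ s ∈ S, h * s = g ∧ f h < f g) (g : G) :
    ∃ L : List G, (∀ x ∈ L, x ∈ S) ∧ L.prod = g ∧ L.length ≤ f g := by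
  induction hn : f g using Nat.strong_induction_on generalizing g with
  | _ n ih =>
    by_cases hg : g = 1
    · exact ⟨[], by simp, by simp [hg], by simp⟩
    obtain ⟨h, s, hs, rfl, hlt⟩ := h_desc g hg
    obtain ⟨L, hLS, rfl, hLf⟩ := ih _ (hn ▸ hlt) h rfl
    refine ⟨L ++ [s], ?_, by simp, by simp; omega⟩
    simpa [or_imp, forall_and] using ⟨hLS, hs⟩

theorem lengthWrt_eq_of_descent (f : G → ℕ) (h_one : f 1 = 0)
    (h_mul : ∀ g, ∀ s ∈ S, f (g * s) ≤ f g + 1)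
    (h_desc : ∀ g ≠ 1, ∃ h, ∃ s ∈ S, h * s = g ∧ f h < f g) (g : G) :
    lengthWrt S g = f g := by
  obtain ⟨L, hLS, rfl, hLf⟩ := exists_list_prod_eq_of_descent f h_desc g
  refine le_antisymm ((lengthWrt_list_prod_le hLS).trans hLf) ?_
  obtain ⟨L', hL'S, hlen, hprod⟩ := Nat.sInf_mem (s := {n | ∃ L' : List G,
    (∀ x ∈ L', x ∈ S) ∧ L'.length = n ∧ L'.prod = L.prod}) ⟨_, L, hLS, rfl, rfl⟩
  rw [lengthWrt, ← hlen, ← hprod]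
  exact apply_list_prod_le_length f h_one h_mul hL'S

end WordLength

namespace DihedralCycle

/-- The Cayley graph of `D_l` for `{a, b}` is a `2l`-cycle; vertex `p` is joined to `p + 1` by an
edge labelled `a` for even `p` and `b` for odd `p`. `step l i p` follows the edge labelled by the
`i`-th generator of the alternating product (`a` for even `i`). -/
def step (l i p : ℕ) : ℕ :=
  if (i + p) % 2 = 0 then (if p + 1 = 2 * l then 0 else p + 1)
  else (if p = 0 then 2 * l - 1 else p - 1)

def distToZero (l p : ℕ) : ℕ := min p (2 * l - p)

variable {l i p : ℕ}

lemma step_mod_two : step l (i % 2) p = step l i p := by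
  simp only [step, Nat.mod_add_mod]

lemma step_lt (hp : p < 2 * l) : step l i p < 2 * l := by
  grind [step]

lemma step_step (hp : p < 2 * l) : step l i (step l i p) = p := by
  grind [step]

lemma distToZero_step_le : distToZero l (step l i p) ≤ distToZero l p + 1 := by
  grind [distToZero, step]

lemma exists_distToZero_step_lt (hp : p < 2 * l) (h0 : p ≠ 0) :
    ∃ i, distToZero l (step l i p) < distToZero l p :=
  ⟨if p ≤ l then p + 1 else p, by grind [distToZero, step]⟩

/-- Distance from vertex `p` to the edge `{0, 1}`; at `p = 0` the truncation `0 - 1 = 0` is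
intended. -/
def distToEdge (l p : ℕ) : ℕ := min (p - 1) (2 * l - p)

/-- `step l i` commutes with the reflection `p ↦ 1 - p` fixing the edge `{0, 1}`, so it acts on the
levels of `distToEdge`, where it is again a matching of adjacent levels. -/
def levelStep (l i j : ℕ) : ℕ := if (i + j) % 2 = 0 then j - 1 else min (j + 1) (l - 1)

lemma distToEdge_lt (hp : p < 2 * l) : distToEdge l p < l := by
  grind [distToEdge]

lemma distToEdge_step (hp : p < 2 * l) :
    distToEdge l (step l i p) = levelStep l i (distToEdge l p) := by
  grind [distToEdge, step, levelStep]

lemma levelStep_dominates {j k : ℕ} (hjk : j ≤ k) (hk : k < l) :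
    levelStep l i j ≤ levelStep l i k ∨ j ≤ levelStep l i k ∧ levelStep l i j ≤ k := by
  grind [levelStep]

/-- After sorting, the levels of `p, p'` are bounded by those of `q, q'`. -/
def DistToEdgePairLE (l p p' q q' : ℕ) : Prop :=
  distToEdge l p ≤ distToEdge l q ∧ distToEdge l p' ≤ distToEdge l q' ∨
    distToEdge l p ≤ distToEdge l q' ∧ distToEdge l p' ≤ distToEdge l q

lemma distToEdgePairLE_step {q : ℕ} (hp : p < 2 * l) (hq : q < 2 * l)
    (hpq : distToEdge l p ≤ distToEdge l q) :
    DistToEdgePairLE l p (step l i p) q (step l i q) := by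
  rw [DistToEdgePairLE, distToEdge_step hp, distToEdge_step hq]
  exact (levelStep_dominates hpq (distToEdge_lt hq)).imp (⟨hpq, ·⟩) id

def AntitoneInDistToEdge (l : ℕ) (c : ℕ → ℕ) : Prop :=
  ∀ ⦃p q⦄, p < 2 * l → q < 2 * l → distToEdge l p ≤ distToEdge l q → c q ≤ c p

namespace AntitoneInDistToEdge

variable {c : ℕ → ℕ}

lemma add_le_add (hc : AntitoneInDistToEdge l c) {p p' q q' : ℕ} (hp : p < 2 * l)
    (hp' : p' < 2 * l) (hq : q < 2 * l) (hq' : q' < 2 * l) (h : DistToEdgePairLE l p p' q q') :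
    c q + c q' ≤ c p + c p' := by
  rcases h with ⟨h, h'⟩ | ⟨h, h'⟩
  · exact Nat.add_le_add (hc hp hq h) (hc hp' hq' h')
  · rw [add_comm]
    exact Nat.add_le_add (hc hp hq' h) (hc hp' hq h')

lemma of_eq_add_comp_step (hc : AntitoneInDistToEdge l c) (i : ℕ) {c' : ℕ → ℕ}
    (hc' : ∀ p < 2 * l, c' p = c p + c (step l i p)) : AntitoneInDistToEdge l c' := by
  intro p q hp hq hpq
  rw [hc' p hp, hc' q hq]
  exact hc.add_le_add hp (step_lt hp) hq (step_lt hq) (distToEdgePairLE_step hp hq hpq)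

end AntitoneInDistToEdge

def fiberStart (l x : ℕ) : ℕ := if x % 2 = 0 then x else 2 * l - 1 - x

lemma min_distToZero_eq_iff {x : ℕ} (hx : x < l) (hp : p < 2 * l) :
    min (distToZero l p) (distToZero l (step l 0 p)) = x ↔
      p = fiberStart l x ∨ p = fiberStart l x + 1 := by
  grind [distToZero, step, fiberStart]

lemma fiberStart_add_one_lt {x : ℕ} (hx : x < l) : fiberStart l x + 1 < 2 * l := by
  grind [fiberStart]

lemma distToEdgePairLE_fiberStart_succ {x : ℕ} (hx : x + 1 < l) :
    DistToEdgePairLE l (fiberStart l x) (fiberStart l x + 1)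
      (fiberStart l (x + 1)) (fiberStart l (x + 1) + 1) := by
  grind [DistToEdgePairLE, distToEdge, fiberStart]

end DihedralCycle

namespace DihedralGroup

open DihedralCycle

/-- `r k = (ab)^k` sits at vertex `2k` and `sr (-k) = (ab)^k a` at vertex `2k + 1`. -/
def cyclePos {l : ℕ} : DihedralGroup l → ℕ
  | r i => 2 * i.val
  | sr i => 2 * (-i).val + 1

def altGen (l i : ℕ) : DihedralGroup l := if i % 2 = 0 then sr 0 else sr 1

variable {l : ℕ}

lemma cyclePos_eq_zero_iff {g : DihedralGroup l} : cyclePos g = 0 ↔ g = 1 := by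
  cases g with
  | r i => simp [cyclePos, ← r_zero, ZMod.val_eq_zero]
  | sr i => simp [cyclePos, ← r_zero]

lemma cyclePos_one : cyclePos (1 : DihedralGroup l) = 0 := cyclePos_eq_zero_iff.2 rfl

lemma altGen_mem_dihGens (i : ℕ) : altGen l i ∈ dihGens l := by
  unfold altGen dihGens
  split_ifs <;> simp

lemma altGen_mul_self (i : ℕ) : altGen l i * altGen l i = 1 := by
  unfold altGen
  split_ifs <;> exact sr_mul_self _

lemma altProd_zero (ε : Fin 0 → Bool) : altProd l 0 ε = 1 := rfl

lemma altProd_snoc (t : ℕ) (ε : Fin t → Bool) (b : Bool) :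
    altProd l (t + 1) (Fin.snoc ε b) = altProd l t ε * if b then altGen l t else 1 := by
  simp [altProd, altGen, List.finRange_succ_last, Fin.snoc_castSucc, Fin.snoc_last,
    Function.comp_def]

noncomputable def walkCount (l t p : ℕ) : ℕ :=
  Nat.card {ε : Fin t → Bool // cyclePos (altProd l t ε) = p}

lemma walkCount_zero (p : ℕ) : walkCount l 0 p = if p = 0 then 1 else 0 := by
  simp only [walkCount, altProd_zero, cyclePos_one, eq_comm (a := 0)]
  split_ifs with hp <;> simp [hp]

variable [NeZero l]

lemma cyclePos_lt (g : DihedralGroup l) : cyclePos g < 2 * l := by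
  cases g with
  | r i => have := ZMod.val_lt i; simp only [cyclePos]; omega
  | sr i => have := ZMod.val_lt (-i); simp only [cyclePos]; omega

lemma cyclePos_mul_sr_zero (g : DihedralGroup l) :
    cyclePos (g * sr 0) = step l 0 (cyclePos g) := by
  have hg := cyclePos_lt g
  cases g with
  | r k =>
    simp only [r_mul_sr, cyclePos, zero_sub, neg_neg] at hg ⊢
    grind [step]
  | sr k =>
    simp only [sr_mul_sr, cyclePos, zero_sub] at hg ⊢
    grind [step]

lemma cyclePos_mul_sr_one (g : DihedralGroup l) :
    cyclePos (g * sr 1) = step l 1 (cyclePos g) := by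
  have hg := cyclePos_lt g
  cases g with
  | r k =>
    simp only [r_mul_sr, cyclePos, neg_sub, ZMod.val_sub_one_eq_ite] at hg ⊢
    grind [step]
  | sr k =>
    simp only [sr_mul_sr, cyclePos, sub_eq_neg_add, ZMod.val_add_one_eq_ite] at hg ⊢
    grind [step]

lemma cyclePos_mul_altGen (g : DihedralGroup l) (i : ℕ) :
    cyclePos (g * altGen l i) = step l i (cyclePos g) := by
  rw [← step_mod_two, altGen]
  rcases Nat.mod_two_eq_zero_or_one i with hi | hi <;> simp only [hi, reduceIte, one_ne_zero]
  exacts [cyclePos_mul_sr_zero g, cyclePos_mul_sr_one g]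

lemma lengthWrt_dihGens (g : DihedralGroup l) :
    lengthWrt (dihGens l) g = distToZero l (cyclePos g) := by
  refine lengthWrt_eq_of_descent (fun g => distToZero l (cyclePos g)) ?_ ?_ ?_ g
  · simp [cyclePos_one, distToZero]
  · rintro g s (rfl | rfl)
    · exact cyclePos_mul_sr_zero g ▸ distToZero_step_le
    · exact cyclePos_mul_sr_one g ▸ distToZero_step_le
  · intro g hg
    obtain ⟨i, hi⟩ :=
      exists_distToZero_step_lt (cyclePos_lt g) (cyclePos_eq_zero_iff.not.2 hg)
    refine ⟨g * altGen l i, altGen l i, altGen_mem_dihGens i, ?_, ?_⟩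
    · rw [mul_assoc, altGen_mul_self, mul_one]
    · rwa [cyclePos_mul_altGen]

lemma dEdge_eq_iff {x : ℕ} (hx : x < l) (Y : DihedralGroup l) :
    dEdge l Y = x ↔ cyclePos Y = fiberStart l x ∨ cyclePos Y = fiberStart l x + 1 := by
  rw [dEdge, lengthWrt_dihGens, lengthWrt_dihGens, cyclePos_mul_sr_zero]
  exact min_distToZero_eq_iff hx (cyclePos_lt Y)

lemma walkCount_succ (t : ℕ) {p : ℕ} (hp : p < 2 * l) :
    walkCount l (t + 1) p = walkCount l t p + walkCount l t (step l t p) := by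
  rw [walkCount, ← Nat.card_congr ((Fin.snocEquiv fun _ => Bool).subtypeEquiv
      (p := fun y => cyclePos (altProd l (t + 1) (Fin.snoc y.2 y.1)) = p) fun _ => Iff.rfl),
    Nat.card_congr (Equiv.subtypeProdEquivSigmaSubtype fun b ε =>
      cyclePos (altProd l (t + 1) (Fin.snoc ε b)) = p), Nat.card_sigma, Fintype.sum_bool]
  simp only [altProd_snoc, cyclePos_mul_altGen, Bool.false_eq_true, reduceIte, mul_one]
  rw [add_comm, walkCount, walkCount]
  congr 1
  refine Nat.card_congr (Equiv.subtypeEquivRight fun ε => ?_)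
  exact ⟨fun h => h ▸ (step_step (cyclePos_lt _)).symm, fun h => h ▸ step_step hp⟩

lemma antitoneInDistToEdge_walkCount {t : ℕ} (ht : t ≠ 0) :
    AntitoneInDistToEdge l (walkCount l t) := by
  induction t with
  | zero => contradiction
  | succ t ih =>
    rcases Nat.eq_zero_or_pos t with rfl | ht
    -- `walkCount l 0` is not reflection symmetric; `walkCount l 1` is the indicator of `{0, 1}`.
    · intro p q hp hq hpq
      rw [walkCount_succ 0 hp, walkCount_succ 0 hq]
      simp only [walkCount_zero]
      grind [distToEdge, step]
    · exact (ih ht.ne').of_eq_add_comp_step t fun p hp => walkCount_succ t hp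

lemma card_dEdge_eq (t : ℕ) {x : ℕ} (hx : x < l) :
    Nat.card {ε : Fin t → Bool // dEdge l (altProd l t ε) = x} =
      walkCount l t (fiberStart l x) + walkCount l t (fiberStart l x + 1) := by
  rw [Nat.card_congr (Equiv.subtypeEquivRight fun ε => dEdge_eq_iff hx (altProd l t ε)),
    Nat.card_subtype_eq_or_eq _ (Nat.succ_ne_self _).symm, walkCount, walkCount]

end DihedralGroup

theorem stmt5_general (l : ℕ) (t : ℕ) (x : ℕ) (hx : x + 1 ≤ l - 1) :
    Nat.card {ε : Fin t → Bool // dEdge l (altProd l t ε) = x + 1} ≤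
      Nat.card {ε : Fin t → Bool // dEdge l (altProd l t ε) = x} := by
  have : NeZero l := ⟨by omega⟩
  rw [DihedralGroup.card_dEdge_eq t (by omega), DihedralGroup.card_dEdge_eq t (by omega)]
  rcases Nat.eq_zero_or_pos t with rfl | ht
  · simp only [DihedralGroup.walkCount_zero]
    grind [DihedralCycle.fiberStart]
  · have h₀ := DihedralCycle.fiberStart_add_one_lt (l := l) (x := x) (by omega)
    have h₁ := DihedralCycle.fiberStart_add_one_lt (l := l) (x := x + 1) (by omega)
    exact (DihedralGroup.antitoneInDistToEdge_walkCount ht.ne').add_le_add (by omega) h₀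
      (by omega) h₁ (DihedralCycle.distToEdgePairLE_fiberStart_succ (by omega))

/-- For the alternating random product `Y_t` in `D_l` with i.i.d. uniform `ε ∈ {0,1}`,
the distribution `(p_t(0),…,p_t(l-1))` of `d(Y_t, {e,a})` is non-increasing.
(Probabilities are expressed by counting the uniform sample points `ε`.) -/
theorem stmt5 (l : ℕ) (hl : 2 ≤ l) (t : ℕ) (x : ℕ) (hx : x + 1 ≤ l - 1) :
    Nat.card {ε : Fin t → Bool // dEdge l (altProd l t ε) = x + 1} ≤
      Nat.card {ε : Fin t → Bool // dEdge l (altProd l t ε) = x} :=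
  stmt5_general l t x hx
end

section
/- In the wreath product ℤ ≀ D₂ with D₂ = ℤ/2 × ℤ/2 generated by commuting involutions a and b, for every k ≥ 0 the map sending τ = (+1, 𝟙) ↦ (+1, 𝟙), (0, a δ₀) ↦ (0, a δ₀), and (0, b δ_k) ↦ (0, b δ₀) extends to an isomorphism of marked groups between Γ(k, 2, ∞) and Γ(0, 2, ∞); i.e., a word in the generators represents the identity in one group if and only if it does in the other. -/
/-- The shift automorphism of the group of `L`-valued functions on `B`. -/
def shiftEquiv {B : Type*} [AddGroup B] {L : Type*} [Group L] (b : B) :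
    (B → L) ≃* (B → L) where
  toFun f x := f (x - b)
  invFun f x := f (x + b)
  left_inv f := by funext x; simp
  right_inv f := by funext x; simp
  map_mul' f g := rfl

/-- The shift action of `B` on `B → L`, as a homomorphism to automorphisms. -/
def shiftHom (B : Type*) [AddCommGroup B] (L : Type*) [Group L] :
    Multiplicative B →* MulAut (B → L) where
  toFun b := shiftEquiv (Multiplicative.toAdd b)
  map_one' := by ext f x; simp [shiftEquiv]
  map_mul' b c := by ext f x; simp [shiftEquiv, sub_sub]

/-- The (unrestricted) wreath product `L ≀ B`, containing the lamplighter group `B ≀ L`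
of the paper as the subgroup generated by the marked generators. -/
abbrev Wr (B : Type*) [AddCommGroup B] (L : Type*) [Group L] :=
  (B → L) ⋊[shiftHom B L] Multiplicative B

/-- The function equal to `v` at `g` and neutral elsewhere. -/
def delta {B : Type*} [DecidableEq B] {L : Type*} [Group L] (g : B) (v : L) : B → L :=
  fun x => if x = g then v else 1

/-- The marked generators `τ = (+1, 𝟙)`, `α = (0, a δ₀)`, `β = (0, b δ_k)` of
`Γ(k, l, m) = (ℤ/mℤ) ≀ D_l` (with `m = 0` meaning `ℤ`, and `l = 0` meaning `D_∞`). -/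
def gammaGens (k l m : ℕ) : Fin 3 → Wr (ZMod m) (DihedralGroup l) :=
  ![⟨1, Multiplicative.ofAdd 1⟩,
    ⟨delta 0 (DihedralGroup.sr 0), 1⟩,
    ⟨delta (k : ZMod m) (DihedralGroup.sr 1), 1⟩]

-- auxiliary

abbrev M2 := Multiplicative (ZMod 2)

def eD : DihedralGroup 2 ≃* M2 × M2 where
  toFun d := match d with
    | .r i => (Multiplicative.ofAdd i, Multiplicative.ofAdd i)
    | .sr i => (Multiplicative.ofAdd (i+1), Multiplicative.ofAdd i)
  invFun p := if p.1 = p.2 then .r p.2.toAdd else .sr p.2.toAdd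
  left_inv := by decide
  right_inv := by decide
  map_mul' := by decide

def aP : DihedralGroup 2 →* M2 := (MonoidHom.fst M2 M2).comp eD.toMonoidHom
def bP : DihedralGroup 2 →* M2 := (MonoidHom.snd M2 M2).comp eD.toMonoidHom

@[simp] lemma aP_symm (p : M2 × M2) : aP (eD.symm p) = p.1 := by
  simp [aP, MulEquiv.apply_symm_apply]

@[simp] lemma bP_symm (p : M2 × M2) : bP (eD.symm p) = p.2 := by
  simp [bP, MulEquiv.apply_symm_apply]

lemma eD_symm_aP_bP (d : DihedralGroup 2) : eD.symm (aP d, bP d) = d := by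
  have : (aP d, bP d) = eD d := rfl
  rw [this, MulEquiv.symm_apply_apply]

/-- Shift the `b`-part of lamp configurations by `c`. -/
def phiShift (c : ZMod 0) : (ZMod 0 → DihedralGroup 2) ≃* (ZMod 0 → DihedralGroup 2) where
  toFun f x := eD.symm (aP (f x), bP (f (x + c)))
  invFun f x := eD.symm (aP (f x), bP (f (x - c)))
  left_inv f := by
    funext x
    simp only [aP_symm, bP_symm, sub_add_cancel]
    exact eD_symm_aP_bP (f x)
  right_inv f := by
    funext x
    simp only [aP_symm, bP_symm, add_sub_cancel_right]
    exact eD_symm_aP_bP (f x)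
  map_mul' f g := by
    funext x
    show eD.symm (aP ((f*g) x), bP ((f*g) (x + c))) = _
    simp only [Pi.mul_apply, map_mul]
    rw [← Prod.mk_mul_mk, map_mul]

lemma phiShift_shift (c : ZMod 0) (t : Multiplicative (ZMod 0))
    (f : ZMod 0 → DihedralGroup 2) :
    phiShift c (shiftHom (ZMod 0) (DihedralGroup 2) t f)
      = shiftHom (ZMod 0) (DihedralGroup 2) t (phiShift c f) := by
  funext x
  show eD.symm (aP (f (x - t.toAdd)), bP (f (x + c - t.toAdd)))
      = eD.symm (aP (f (x - t.toAdd)), bP (f (x - t.toAdd + c)))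
  rw [add_sub_right_comm]

def psiW (c : ZMod 0) : Wr (ZMod 0) (DihedralGroup 2) →* Wr (ZMod 0) (DihedralGroup 2) where
  toFun g := ⟨phiShift c g.left, g.right⟩
  map_one' := by
    ext
    · show phiShift c 1 _ = _
      rw [map_one]; rfl
    · rfl
  map_mul' g h := by
    ext
    · show phiShift c (g.left * shiftHom _ _ g.right h.left) _ = _
      rw [map_mul, phiShift_shift]; rfl
    · rfl

lemma psiW_inj (c : ZMod 0) : Function.Injective (psiW c) := by
  intro g h hg
  have h1 := congrArg (fun z : Wr (ZMod 0) (DihedralGroup 2) => z.left) hg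
  have h2 := congrArg (fun z : Wr (ZMod 0) (DihedralGroup 2) => z.right) hg
  ext1
  · exact (phiShift c).injective h1
  · exact h2

lemma psiW_gens (k : ℕ) (i : Fin 3) :
    psiW (k : ZMod 0) (gammaGens k 2 0 i) = gammaGens 0 2 0 i := by
  fin_cases i
  · show (⟨phiShift _ 1, _⟩ : Wr _ _) = _
    rw [map_one]
    rfl
  · show (⟨phiShift _ (delta 0 (DihedralGroup.sr 0)), _⟩ : Wr _ _) = _
    congr 1
    funext x
    show eD.symm (aP (delta 0 (DihedralGroup.sr 0) x),
        bP (delta 0 (DihedralGroup.sr 0) (x + k))) = delta 0 (DihedralGroup.sr 0) x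
    have h2 : bP (delta 0 (DihedralGroup.sr 0) (x + (k : ZMod 0))) = 1 := by
      unfold delta; split_ifs <;> decide
    rw [h2]
    unfold delta
    split_ifs with hx
    · decide
    · decide
  · show (⟨phiShift _ (delta (k : ZMod 0) (DihedralGroup.sr 1)), _⟩ : Wr _ _) = _
    congr 1
    funext x
    show eD.symm (aP (delta (k : ZMod 0) (DihedralGroup.sr 1) x),
        bP (delta (k : ZMod 0) (DihedralGroup.sr 1) (x + k))) = delta 0 (DihedralGroup.sr 1) x
    have h1 : aP (delta (k : ZMod 0) (DihedralGroup.sr 1) x) = 1 := by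
      unfold delta; split_ifs <;> decide
    rw [h1]
    unfold delta
    have hiff : x + (k : ZMod 0) = (k : ZMod 0) ↔ x = 0 := by
      constructor
      · intro h; exact add_right_cancel (by rw [h, zero_add])
      · intro h; rw [h, zero_add]
    simp only [hiff]
    split_ifs with hx
    · decide
    · decide

/-- For every `k ≥ 0`, the map sending generators to generators extends to an
isomorphism of marked groups between `Γ(k,2,∞)` and `Γ(0,2,∞)` (both equal to
`ℤ ≀ D₂` with `D₂` the Klein four-group): a word in the three generators represents
the identity in one group if and only if it does in the other. -/
theorem stmt9 (k : ℕ) (w : FreeGroup (Fin 3)) :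
    FreeGroup.lift (gammaGens k 2 0) w = 1 ↔ FreeGroup.lift (gammaGens 0 2 0) w = 1 := by
  have hcomp : (psiW (k : ZMod 0)).comp (FreeGroup.lift (gammaGens k 2 0))
      = FreeGroup.lift (gammaGens 0 2 0) := by
    apply FreeGroup.ext_hom
    intro i
    simp [psiW_gens k i]
  constructor
  · intro h
    rw [← hcomp, MonoidHom.comp_apply, h, map_one]
  · intro h
    apply psiW_inj (k : ZMod 0)
    rw [map_one, ← MonoidHom.comp_apply, hcomp, h]
end

section
/- Let l ∈ ℤ_{≥2} ∪ {∞} and let k, m satisfy 2k < m. Then for every word w of length at most k − 1 in the free group on three letters, w represents the identity in Γ(k, l, m) = (ℤ/mℤ) ≀ D_l (with generators (+1,𝟙), (0, a δ₀), (0, b δ_k)) if and only if w represents the identity in Γ(0, 2, ∞) = ℤ ≀ D₂ (with generators (+1,𝟙), (0, a δ₀), (0, b δ₀)). In particular the balls of radius (k−1)/2 in these two marked groups coincide. -/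
/-!
In `Wr B G`, with generators `τ = (+1, 1)`, `α = (0, u δ_p)`, `β = (0, v δ_q)`, the image of a
word is a pair (lamp configuration, cursor). Read from the left, `τ^{±1}` moves the cursor by
`±1`, while `α^{±1}` and `β^{±1}` multiply the lamps at `cursor + p` and `cursor + q` by `u^{±1}`
and `v^{±1}`. As long as an `α`-lamp and a `β`-lamp
never meet (the cursor moves less than `q - p`, or `u` and `v` commute), the lamp at `x` is
`u ^ a * v ^ b` for the signed numbers `a`, `b` of visits, and since `u ≠ v` are involutions the
word is trivial iff the displacement vanishes and all visit counts are even.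

For a word of length `n ≤ k - 1` the cursor stays in `[-n, n]`, and `ℤ → ℤ/m` is injective on
`[-2k, 2k]`, so displacement and visit counts are the same in `ℤ/m` as in `ℤ`; the two
criteria, for `Γ(k, l, m)` and for `Γ(0, 2, ∞)`, therefore agree.
-/

lemma SemidirectProduct.inr_mul_mk {N H : Type*} [Group N] [Group H] {φ : H →* MulAut N} (t : H)
    (n : N) (h : H) : (SemidirectProduct.inr t : N ⋊[φ] H) * ⟨n, h⟩ = ⟨φ t n, t * h⟩ := by
  ext <;> simp

lemma SemidirectProduct.inl_mul_mk {N H : Type*} [Group N] [Group H] {φ : H →* MulAut N} (f : N)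
    (n : N) (h : H) : (SemidirectProduct.inl f : N ⋊[φ] H) * ⟨n, h⟩ = ⟨f * n, h⟩ := by
  ext <;> simp

lemma zpow_mul_zpow_eq_one_iff {G : Type*} [Group G] {u v : G} (hu : orderOf u = 2)
    (hv : orderOf v = 2) (huv : u ≠ v) (a b : ℤ) : u ^ a * v ^ b = 1 ↔ 2 ∣ a ∧ 2 ∣ b := by
  have hu1 : u ≠ 1 := fun h => by simp [h] at hu
  have hv1 : v ≠ 1 := fun h => by simp [h] at hv
  have hvv : v⁻¹ = v := inv_eq_of_mul_eq_one_right (by rw [← sq, ← hv, pow_orderOf_eq_one])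
  rw [← zpow_mod_orderOf u, ← zpow_mod_orderOf v, hu, hv, Int.dvd_iff_emod_eq_zero,
    Int.dvd_iff_emod_eq_zero]
  rcases Int.emod_two_eq_zero_or_one a with ha | ha <;>
    rcases Int.emod_two_eq_zero_or_one b with hb | hb <;>
    simp [ha, hb, hu1, hv1, mul_eq_one_iff_eq_inv, hvv, huv]

lemma delta_zpow {B : Type*} [DecidableEq B] {G : Type*} [Group G] (p : B) (u : G) (n : ℤ) :
    delta p u ^ n = delta p (u ^ n) := by
  funext x
  by_cases hx : x = p <;> simp [delta, hx]

namespace DihedralGroup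

lemma sr_zero_ne_sr_one {l : ℕ} (hl : l ≠ 1) : sr (0 : ZMod l) ≠ sr 1 := by
  have := ZMod.nontrivial_iff.mpr hl
  exact fun h => zero_ne_one (sr.inj h)

lemma commute_sr_zero_sr_one : Commute (sr 0 : DihedralGroup 2) (sr 1) := by
  show sr 0 * sr 1 = sr 1 * sr 0
  decide

end DihedralGroup

namespace Lamplighter

open DihedralGroup Multiplicative

def sgn (ε : Bool) : ℤ := if ε then 1 else -1

lemma abs_sgn (ε : Bool) : |sgn ε| = 1 := by cases ε <;> simp [sgn]

def disp : List (Fin 3 × Bool) → ℤ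
  | [] => 0
  | (j, ε) :: L => (if j = 0 then sgn ε else 0) + disp L

lemma abs_disp_le (L : List (Fin 3 × Bool)) : |disp L| ≤ L.length := by
  induction L with
  | nil => simp [disp]
  | cons a L ih =>
    obtain ⟨j, ε⟩ := a
    have : |(if j = 0 then sgn ε else 0)| ≤ 1 := by split_ifs <;> simp [abs_sgn]
    simp only [disp, List.length_cons, Nat.cast_succ]
    linarith [abs_add_le (if j = 0 then sgn ε else 0) (disp L)]

section Visits

variable {B : Type*} [AddGroupWithOne B] [DecidableEq B]

/-- `visits i L x` is the signed number of letters `i^{±1}` of `L` read while the cursor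
(moved by the letters `0^{±1}`, starting at `0`) stands at `x`. -/
def visits (i : Fin 3) : List (Fin 3 × Bool) → B → ℤ
  | [], _ => 0
  | (j, ε) :: L, x =>
    if j = 0 then visits i L (x - sgn ε) else (if j = i ∧ x = 0 then sgn ε else 0) + visits i L x

lemma visits_eq_zero_of_forall_ne (i : Fin 3) (L : List (Fin 3 × Bool)) (x : B)
    (hx : ∀ c : ℤ, |c| < L.length → x ≠ c) : visits i L x = 0 := by
  induction L generalizing x with
  | nil => rfl
  | cons a L ih =>
    obtain ⟨j, ε⟩ := a
    simp only [List.length_cons, Nat.cast_succ] at hx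
    have hx0 : x ≠ 0 := by simpa using hx 0 (by simp)
    by_cases hj : j = 0
    · simp only [visits, hj, if_true]
      refine ih _ fun c hc h => hx (c + sgn ε) ?_ (by rw [Int.cast_add, ← h, sub_add_cancel])
      linarith [abs_add_le c (sgn ε), abs_sgn ε]
    · simp only [visits, hj, if_false, hx0, and_false, zero_add]
      exact ih x fun c hc => hx c (by linarith)

end Visits

def NoTorsionUpTo (B : Type*) [AddGroupWithOne B] (M : ℕ) : Prop :=
  ∀ d : ℤ, |d| ≤ M → (d : B) = 0 → d = 0

lemma noTorsionUpTo_zmod {m M : ℕ} (hM : m = 0 ∨ M < m) : NoTorsionUpTo (ZMod m) M := by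
  intro d hd h
  rw [ZMod.intCast_zmod_eq_zero_iff_dvd] at h
  rcases hM with rfl | hM
  · simpa using h
  · exact Int.eq_zero_of_abs_lt_dvd h (by omega)

lemma NoTorsionUpTo.intCast_eq_zero_iff {B : Type*} [AddGroupWithOne B] {M : ℕ}
    (hB : NoTorsionUpTo B M) {d : ℤ} (hd : |d| ≤ M) : (d : B) = 0 ↔ d = 0 :=
  ⟨hB d hd, fun h => by simp [h]⟩

lemma NoTorsionUpTo.intCast_disp_eq_zero_iff {B : Type*} [AddGroupWithOne B] {M : ℕ}
    (hB : NoTorsionUpTo B M) (L : List (Fin 3 × Bool))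
    (hL : L.length ≤ M) : (disp L : B) = 0 ↔ disp L = 0 :=
  hB.intCast_eq_zero_iff (by linarith [abs_disp_le L, (Nat.cast_le (α := ℤ)).mpr hL])

section Transfer

variable {B : Type*} [AddGroupWithOne B] [DecidableEq B] {M : ℕ}

lemma NoTorsionUpTo.visits_intCast (hB : NoTorsionUpTo B M) (i : Fin 3)
    (L : List (Fin 3 × Bool)) (c : ℤ) (hc : |c| + L.length ≤ M) :
    visits i L (c : B) = visits i L c := by
  induction L generalizing c with
  | nil => rfl
  | cons a L ih =>
    obtain ⟨j, ε⟩ := a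
    simp only [List.length_cons, Nat.cast_succ] at hc
    by_cases hj : j = 0
    · simp only [visits, hj, if_true]
      rw [← Int.cast_sub, ih _ (by linarith [abs_sub c (sgn ε), abs_sgn ε]), Int.cast_id]
    · simp only [visits, hj, if_false, hB.intCast_eq_zero_iff (by linarith [abs_nonneg c] :
        |c| ≤ M)]
      rw [ih c (by linarith)]

lemma NoTorsionUpTo.forall_visits_iff (hB : NoTorsionUpTo B M) {P : ℤ → Prop} (hP : P 0)
    (i : Fin 3) (L : List (Fin 3 × Bool)) (hL : 2 * L.length ≤ M) :
    (∀ x : B, P (visits i L x)) ↔ ∀ c : ℤ, |c| < L.length → P (visits i L c) := by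
  refine ⟨fun h c hc => ?_, fun h x => ?_⟩
  · rw [← hB.visits_intCast i L c (by linarith)]
    exact h c
  · by_cases hx : ∃ c : ℤ, |c| < L.length ∧ x = c
    · obtain ⟨c, hc, rfl⟩ := hx
      rw [hB.visits_intCast i L c (by linarith)]
      exact h c hc
    · simp only [not_exists, not_and] at hx
      rw [visits_eq_zero_of_forall_ne i L x hx]
      exact hP

lemma NoTorsionUpTo.forall_visits_congr {B' : Type*} [AddGroupWithOne B'] [DecidableEq B']
    (hB : NoTorsionUpTo B M) (hB' : NoTorsionUpTo B' M) {P : ℤ → Prop} (hP : P 0) (i : Fin 3)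
    (L : List (Fin 3 × Bool)) (hL : 2 * L.length ≤ M) :
    (∀ x : B, P (visits i L x)) ↔ ∀ x : B', P (visits i L x) :=
  (hB.forall_visits_iff hP i L hL).trans (hB'.forall_visits_iff hP i L hL).symm

end Transfer

section Lift

variable {B : Type*} [AddCommGroupWithOne B] [DecidableEq B] {G : Type*} [Group G]

def lampGens (p q : B) (u v : G) : Fin 3 → Wr B G :=
  ![SemidirectProduct.inr (ofAdd 1), SemidirectProduct.inl (delta p u),
    SemidirectProduct.inl (delta q v)]

lemma lift_mk_lampGens (p q : B) (u v : G) (L : List (Fin 3 × Bool))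
    (h : Commute u v ∨ ∀ c : ℤ, |c| < L.length → (c : B) ≠ q - p) :
    FreeGroup.lift (lampGens p q u v) (FreeGroup.mk L) =
      ⟨fun x => u ^ visits 1 L (x - p) * v ^ visits 2 L (x - q), ofAdd (disp L : B)⟩ := by
  induction L with
  | nil => ext <;> simp [visits, disp, ← FreeGroup.one_eq_mk]
  | cons a L ih =>
    obtain ⟨j, ε⟩ := a
    have hL : Commute u v ∨ ∀ c : ℤ, |c| < L.length → (c : B) ≠ q - p :=
      h.imp_right fun h c hc => h c (by simp only [List.length_cons]; push_cast; linarith)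
    have hcond :
        cond ε (lampGens p q u v j) (lampGens p q u v j)⁻¹ = lampGens p q u v j ^ sgn ε := by
      cases ε <;> simp [sgn]
    rw [FreeGroup.lift_mk, List.map_cons, List.prod_cons, ← FreeGroup.lift_mk, ih hL, hcond]
    fin_cases j
    · have : (SemidirectProduct.inr (ofAdd (1 : B)) : Wr B G) ^ sgn ε =
          SemidirectProduct.inr (ofAdd (sgn ε : B)) := by
        rw [← map_zpow, ← ofAdd_zsmul, zsmul_one]
      simp only [lampGens, Fin.zero_eta, Matrix.cons_val_zero, this, SemidirectProduct.inr_mul_mk]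
      congr 1
      · funext x
        simp [visits, shiftHom, shiftEquiv, sub_right_comm]
      · simp [disp, ← ofAdd_add]
    · simp only [lampGens, Fin.mk_one, Matrix.cons_val_one, Matrix.cons_val_zero, ← map_zpow,
        delta_zpow, SemidirectProduct.inl_mul_mk]
      congr 1
      · funext x
        by_cases hx : x = p <;> simp [visits, delta, hx, sub_eq_zero, zpow_add, mul_assoc]
      · simp [disp]
    · simp only [lampGens, Fin.reduceFinMk, Matrix.cons_val, ← map_zpow, delta_zpow,
        SemidirectProduct.inl_mul_mk]
      have hcomm : Commute (v ^ sgn ε) (u ^ visits 1 L (q - p)) := by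
        rcases hL with hL | hL
        · exact hL.symm.zpow_zpow _ _
        · rw [visits_eq_zero_of_forall_ne _ _ _ fun c hc => (hL c hc).symm, zpow_zero]
          exact Commute.one_right _
      congr 1
      · funext x
        by_cases hx : x = q
        · simp [visits, delta, hx, zpow_add, ← mul_assoc, hcomm.eq]
        · simp [visits, delta, hx, sub_eq_zero]
      · simp [disp]

lemma lift_mk_lampGens_eq_one_iff {p q : B} {u v : G} (hu : orderOf u = 2) (hv : orderOf v = 2)
    (huv : u ≠ v) (L : List (Fin 3 × Bool))
    (h : Commute u v ∨ ∀ c : ℤ, |c| < L.length → (c : B) ≠ q - p) :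
    FreeGroup.lift (lampGens p q u v) (FreeGroup.mk L) = 1 ↔
      (disp L : B) = 0 ∧ (∀ x : B, 2 ∣ visits 1 L x) ∧ ∀ x : B, 2 ∣ visits 2 L x := by
  rw [lift_mk_lampGens p q u v L h, SemidirectProduct.ext_iff, and_comm, funext_iff]
  simp only [SemidirectProduct.one_left, SemidirectProduct.one_right, Pi.one_apply,
    zpow_mul_zpow_eq_one_iff hu hv huv, forall_and, ofAdd_eq_one]
  exact and_congr Iff.rfl (and_congr ⟨fun h x => by simpa using h (x + p), fun h x => h _⟩
    ⟨fun h x => by simpa using h (x + q), fun h x => h _⟩)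

end Lift

lemma gammaGens_eq_lampGens (k l m : ℕ) :
    gammaGens k l m = lampGens 0 (k : ZMod m) (sr 0) (sr 1) := rfl

end Lamplighter

open Lamplighter DihedralGroup in
/-- Let `l ∈ ℤ_{≥2} ∪ {∞}` and `2k < m` (`l = 0`, resp. `m = 0`, encode `∞`). Every word
of length at most `k - 1` in the free group on three letters represents the identity in
`Γ(k,l,m) = (ℤ/mℤ) ≀ D_l` iff it does in `Γ(0,2,∞) = ℤ ≀ D₂`; in particular the balls
of radius `(k-1)/2` in these two marked groups coincide. -/
theorem stmt10 (k l m : ℕ) (hl : l = 0 ∨ 2 ≤ l) (hm : m = 0 ∨ 2 * k < m)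
    (w : FreeGroup (Fin 3)) (hw : (FreeGroup.toWord w).length ≤ k - 1) :
    FreeGroup.lift (gammaGens k l m) w = 1 ↔ FreeGroup.lift (gammaGens 0 2 0) w = 1 := by
  set L := FreeGroup.toWord w
  have hZm : NoTorsionUpTo (ZMod m) (2 * k) := noTorsionUpTo_zmod hm
  have hZ0 : NoTorsionUpTo (ZMod 0) (2 * k) := noTorsionUpTo_zmod (Or.inl rfl)
  have hsep : ∀ c : ℤ, |c| < L.length → (c : ZMod m) ≠ (k : ZMod m) - 0 := by
    intro c hc h
    have hc' := abs_lt.mp hc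
    have := hZm (c - k) (abs_le.mpr ⟨by omega, by omega⟩) (by push_cast; rw [h, sub_zero, sub_self])
    omega
  rw [← FreeGroup.mk_toWord (x := w), gammaGens_eq_lampGens, gammaGens_eq_lampGens,
    lift_mk_lampGens_eq_one_iff (orderOf_sr 0) (orderOf_sr 1) (sr_zero_ne_sr_one (by omega)) L
      (Or.inr hsep),
    lift_mk_lampGens_eq_one_iff (orderOf_sr 0) (orderOf_sr 1) (sr_zero_ne_sr_one (by omega)) L
      (Or.inl commute_sr_zero_sr_one)]
  have hL : 2 * L.length ≤ 2 * k := by omega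
  exact and_congr
    ((hZm.intCast_disp_eq_zero_iff L (by omega)).trans
      (hZ0.intCast_disp_eq_zero_iff L (by omega)).symm)
    (and_congr (hZm.forall_visits_congr hZ0 (P := (2 ∣ ·)) (dvd_zero 2) 1 L hL)
      (hZm.forall_visits_congr hZ0 (P := (2 ∣ ·)) (dvd_zero 2) 2 L hL))
end

section
/- Let k = (k_s), l = (l_s), m = (m_s) be sequences with 2k_s < m_s, and let Δ be the subgroup of the direct product ∏_s (ℤ/m_sℤ ≀ D_{l_s}) generated by the three diagonal sequences τ = ((+1,𝟙))_s, α = ((0, a_s δ₀))_s, β = ((0, b_s δ_{k_s}))_s. If R < (min_s k_s − 1)/2, then a word of length at most 2R in the three generators represents the identity in Δ if and only if it represents the identity in ℤ ≀ D₂ with its standard marked generating set. -/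
/-- The diagonal generating triple of the infinite diagonal product
`Δ(k,l,m) ≤ ∏_s Γ(k_s, l_s, m_s)`. -/
def diagGens (k l m : ℕ → ℕ) : Fin 3 → (∀ s, Wr (ZMod (m s)) (DihedralGroup (l s))) :=
  fun i s => gammaGens (k s) (l s) (m s) i

/-!
Reading a word in `Γ(k, l, m) = (ℤ/mℤ) ≀ D_l`, the `τ`-letters move a cursor along `ℤ/mℤ`, and an
`α`- (resp. `β`-) letter read with the cursor at `c` multiplies the lamp at `c` (resp. `c + k`) by
the involution `a = sr 0` (resp. `b = sr 1`). For a word of length `n ≤ 2R < k - 1` all cursor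
positions lie in an integer interval of length `n`, so modulo `m > 2k` they stay distinct and no
`α`-lamp meets a `β`-lamp: each lamp is a power of a single involution. Hence the word is trivial
iff its total displacement is `0` and every pair (cursor position, lamp letter) occurs an even
number of times. The same criterion holds in `ℤ ≀ D₂`, where `a` and `b` are distinct and commute,
and a word is trivial in `Δ` iff it is trivial in every factor.
-/

theorem List.prod_map_ite_eq_pow {α M : Type*} [Monoid M] (l : List α) (p : α → Prop)
    [DecidablePred p] (a : M) :
    (l.map fun x => if p x then a else 1).prod = a ^ l.countP (p ·) := by
  induction l with
  | nil => simp
  | cons x l ih => by_cases hx : p x <;> simp [hx, ih, pow_succ']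

theorem List.prod_map_ite_mul_ite_eq_pow_mul_pow {α M : Type*} [Monoid M] (l : List α)
    (p q : α → Prop) [DecidablePred p] [DecidablePred q] {a b : M} (hab : Commute a b) :
    (l.map fun x => (if p x then a else 1) * (if q x then b else 1)).prod =
      a ^ l.countP (p ·) * b ^ l.countP (q ·) := by
  induction l with
  | nil => simp
  | cons x l ih =>
    have key : ∀ e f : ℕ, a ^ e * b ^ f * (a ^ l.countP (p ·) * b ^ l.countP (q ·)) =
        a ^ (l.countP (p ·) + e) * b ^ (l.countP (q ·) + f) := by
      intro e f
      rw [add_comm (l.countP _), add_comm (l.countP (q ·)), pow_add, pow_add, mul_assoc,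
        ← mul_assoc (b ^ f), (hab.symm.pow_pow f _).eq]
      simp only [mul_assoc]
    rw [List.map_cons, List.prod_cons, ih, List.countP_cons, List.countP_cons, ← key]
    congr 2 <;> split_ifs <;> simp_all

theorem pow_eq_one_iff_even {M : Type*} [Monoid M] {a : M} (ha : orderOf a = 2) {n : ℕ} :
    a ^ n = 1 ↔ Even n := by
  rw [← orderOf_dvd_iff_pow_eq_one, ha, even_iff_two_dvd]

theorem pow_mul_pow_eq_one_iff {G : Type*} [Group G] {a b : G} (ha : orderOf a = 2)
    (hb : orderOf b = 2) (hab : a ≠ b) {p q : ℕ} : a ^ p * b ^ q = 1 ↔ Even p ∧ Even q := by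
  have ha1 : a ≠ 1 := by rintro rfl; simp at ha
  have hb1 : b ≠ 1 := by rintro rfl; simp at hb
  have hab1 : a * b ≠ 1 := by
    rwa [Ne, mul_eq_one_iff_eq_inv, inv_eq_self_of_orderOf_eq_two hb]
  rw [← pow_mod_orderOf a, ← pow_mod_orderOf b, ha, hb, Nat.even_iff, Nat.even_iff]
  rcases Nat.mod_two_eq_zero_or_one p with hp | hp <;>
    rcases Nat.mod_two_eq_zero_or_one q with hq | hq <;> simp [hp, hq, ha1, hb1, hab1]

lemma intCast_zmod_eq_zero_iff_of_natAbs_lt {m : ℕ} {z : ℤ} (h : m = 0 ∨ z.natAbs < m) :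
    (z : ZMod m) = 0 ↔ z = 0 := by
  rw [ZMod.intCast_zmod_eq_zero_iff_dvd]
  rcases h with rfl | h
  · simp
  · exact ⟨fun hd => Int.eq_zero_of_dvd_of_natAbs_lt_natAbs hd (by simpa using h),
      fun hz => hz ▸ dvd_zero _⟩

open DihedralGroup

def letterSign (s : Bool) : ℤ := cond s 1 (-1)

lemma natAbs_letterSign (s : Bool) : (letterSign s).natAbs = 1 := by cases s <;> rfl

/-- Each lamp letter of a word, recorded as the cursor position (in `ℤ`, starting at `0`) at which
it is read, paired with `false` for `α^{±1}` and `true` for `β^{±1}`. -/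
def lampEvents : List (Fin 3 × Bool) → List (ℤ × Bool)
  | [] => []
  | (i, s) :: L =>
    if i = 0 then (lampEvents L).map (Prod.map (· + letterSign s) id)
    else (0, decide (i = 2)) :: lampEvents L

def displacement : List (Fin 3 × Bool) → ℤ
  | [] => 0
  | (i, s) :: L => (if i = 0 then letterSign s else 0) + displacement L

def CursorInjective (m : ℕ) (L : List (Fin 3 × Bool)) : Prop :=
  ∀ ev ∈ lampEvents L, ∀ ev' ∈ lampEvents L, (ev.1 : ZMod m) = ev'.1 → ev.1 = ev'.1

def IsBalanced (L : List (Fin 3 × Bool)) : Prop :=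
  displacement L = 0 ∧ ∀ ev, Even ((lampEvents L).count ev)

lemma natAbs_displacement_le (L : List (Fin 3 × Bool)) :
    (displacement L).natAbs ≤ L.length := by
  induction L with
  | nil => simp [displacement]
  | cons p L ih =>
    obtain ⟨i, s⟩ := p
    have := natAbs_letterSign s
    have := Int.natAbs_add_le (if i = 0 then letterSign s else 0) (displacement L)
    have : (if i = 0 then letterSign s else 0).natAbs ≤ 1 := by split <;> omega
    simp only [displacement, List.length_cons]
    omega

lemma natAbs_le_of_mem_lampEvents {L : List (Fin 3 × Bool)} {ev : ℤ × Bool}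
    (h : ev ∈ lampEvents L) : ev.1.natAbs ≤ L.length := by
  induction L generalizing ev with
  | nil => simp [lampEvents] at h
  | cons p L ih =>
    obtain ⟨i, s⟩ := p
    simp only [lampEvents, List.length_cons] at h ⊢
    split_ifs at h
    · obtain ⟨ev, hev, rfl⟩ := List.mem_map.mp h
      have := ih hev
      have := natAbs_letterSign s
      have := Int.natAbs_add_le ev.1 (letterSign s)
      simp only [Prod.map_fst]
      omega
    · rcases List.mem_cons.mp h with rfl | hev
      · simp
      · have := ih hev
        omega

lemma natAbs_sub_le_of_mem_lampEvents {L : List (Fin 3 × Bool)} {ev ev' : ℤ × Bool}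
    (h : ev ∈ lampEvents L) (h' : ev' ∈ lampEvents L) : (ev.1 - ev'.1).natAbs ≤ L.length := by
  induction L generalizing ev ev' with
  | nil => simp [lampEvents] at h
  | cons p L ih =>
    obtain ⟨i, s⟩ := p
    simp only [lampEvents, List.length_cons] at h h' ⊢
    split_ifs at h h'
    · obtain ⟨ev, hev, rfl⟩ := List.mem_map.mp h
      obtain ⟨ev', hev', rfl⟩ := List.mem_map.mp h'
      have := ih hev hev'
      simp only [Prod.map_fst, add_sub_add_right_eq_sub]
      omega
    · rcases List.mem_cons.mp h with rfl | hev <;> rcases List.mem_cons.mp h' with rfl | hev'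
      · simp
      · have := natAbs_le_of_mem_lampEvents hev'
        simp only [zero_sub, Int.natAbs_neg]
        omega
      · have := natAbs_le_of_mem_lampEvents hev
        simp only [sub_zero]
        omega
      · have := ih hev hev'
        omega

section LampConfig

variable {m : ℕ} {G : Type*} [Group G]

def eventLamp (a b : G) (K : ZMod m) (ev : ℤ × Bool) : ZMod m → G :=
  cond ev.2 (delta ((ev.1 : ZMod m) + K) b) (delta (ev.1 : ZMod m) a)

def lampConfig (a b : G) (K : ZMod m) (L : List (Fin 3 × Bool)) : ZMod m → G :=
  ((lampEvents L).map (eventLamp a b K)).prod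

def lampCount (m : ℕ) (L : List (Fin 3 × Bool)) (β : Bool) (x : ZMod m) : ℕ :=
  (lampEvents L).countP fun ev => ev.2 = β ∧ (ev.1 : ZMod m) = x

lemma eventLamp_apply (a b : G) (K : ZMod m) (ev : ℤ × Bool) (x : ZMod m) :
    eventLamp a b K ev x =
      cond ev.2 (if (ev.1 : ZMod m) = x - K then b else 1)
        (if (ev.1 : ZMod m) = x then a else 1) := by
  obtain ⟨c, _ | _⟩ := ev <;> simp [eventLamp, delta, eq_comm, sub_eq_iff_eq_add]

lemma lampConfig_apply (a b : G) (K : ZMod m) (L : List (Fin 3 × Bool)) (x : ZMod m) :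
    lampConfig a b K L x = ((lampEvents L).map fun ev => eventLamp a b K ev x).prod := by
  rw [lampConfig, Pi.list_prod_apply, List.map_map]
  rfl

lemma eventLamp_shift (a b : G) (K : ZMod m) (c : ℤ) (β : Bool) (d : ℤ) :
    eventLamp a b K (c + d, β) = shiftEquiv (d : ZMod m) (eventLamp a b K (c, β)) := by
  funext x
  cases β <;> simp [shiftEquiv, eventLamp_apply, sub_right_comm x, eq_sub_iff_add_eq]

lemma lampConfig_cons_zero (a b : G) (K : ZMod m) (s : Bool) (L : List (Fin 3 × Bool)) :
    lampConfig a b K ((0, s) :: L) = shiftEquiv (letterSign s : ZMod m) (lampConfig a b K L) := by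
  simp only [lampConfig, lampEvents, if_pos, map_list_prod, List.map_map]
  congr 1
  refine List.map_congr_left fun ev _ => ?_
  exact eventLamp_shift a b K ev.1 ev.2 _

lemma lampConfig_cons_of_ne_zero (a b : G) (K : ZMod m) {i : Fin 3} (hi : i ≠ 0) (s : Bool)
    (L : List (Fin 3 × Bool)) :
    lampConfig a b K ((i, s) :: L) = eventLamp a b K (0, decide (i = 2)) * lampConfig a b K L := by
  simp [lampConfig, lampEvents, hi]

lemma lampConfig_apply_eq_one_iff_of_separated {a b : G} (ha : orderOf a = 2)
    (hb : orderOf b = 2) (K : ZMod m) (L : List (Fin 3 × Bool)) (x : ZMod m)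
    (hsep : lampCount m L false x = 0 ∨ lampCount m L true (x - K) = 0) :
    lampConfig a b K L x = 1 ↔
      Even (lampCount m L false x) ∧ Even (lampCount m L true (x - K)) := by
  rw [lampConfig_apply]
  rcases hsep with h | h
  · rw [h, List.map_congr_left
        (g := fun ev => if ev.2 = true ∧ (ev.1 : ZMod m) = x - K then b else 1),
      List.prod_map_ite_eq_pow, ← lampCount, pow_eq_one_iff_even hb]
    · simp
    · intro ev hev
      have := List.countP_eq_zero.mp h ev hev
      obtain ⟨c, _ | _⟩ := ev <;> simp_all [eventLamp_apply]
  · rw [h, List.map_congr_left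
        (g := fun ev => if ev.2 = false ∧ (ev.1 : ZMod m) = x then a else 1),
      List.prod_map_ite_eq_pow, ← lampCount, pow_eq_one_iff_even ha]
    · simp
    · intro ev hev
      have := List.countP_eq_zero.mp h ev hev
      obtain ⟨c, _ | _⟩ := ev <;> simp_all [eventLamp_apply]

lemma lampConfig_zero_apply {a b : G} (hab : Commute a b) (L : List (Fin 3 × Bool))
    (x : ZMod m) :
    lampConfig a b 0 L x = a ^ lampCount m L false x * b ^ lampCount m L true x := by
  rw [lampConfig_apply, List.map_congr_left (g := fun ev =>
      (if ev.2 = false ∧ (ev.1 : ZMod m) = x then a else 1) *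
        (if ev.2 = true ∧ (ev.1 : ZMod m) = x then b else 1)),
    List.prod_map_ite_mul_ite_eq_pow_mul_pow _ _ _ hab, lampCount, lampCount]
  intro ev _
  obtain ⟨c, _ | _⟩ := ev <;> simp [eventLamp_apply]

end LampConfig

lemma gammaGens_letter (k l m : ℕ) (i : Fin 3) (s : Bool) :
    cond s (gammaGens k l m i) (gammaGens k l m i)⁻¹ =
      if i = 0 then ⟨1, Multiplicative.ofAdd (letterSign s : ZMod m)⟩
      else ⟨eventLamp (sr 0) (sr 1) (k : ZMod m) (0, decide (i = 2)), 1⟩ := by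
  have hinv : ∀ (p : ZMod m) (j : ZMod l), (delta p (sr j))⁻¹ = delta p (sr j) := by
    intro p j
    funext x
    simp [delta, apply_ite (·⁻¹), inv_eq_of_mul_eq_one_right (sr_mul_self j)]
  fin_cases i <;> cases s <;>
    simp [gammaGens, eventLamp, letterSign, hinv, SemidirectProduct.ext_iff]

lemma lift_gammaGens_mk (k l m : ℕ) (L : List (Fin 3 × Bool)) :
    FreeGroup.lift (gammaGens k l m) (FreeGroup.mk L) =
      ⟨lampConfig (sr 0) (sr 1) (k : ZMod m) L,
        Multiplicative.ofAdd (displacement L : ZMod m)⟩ := by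
  rw [FreeGroup.lift_mk]
  induction L with
  | nil => simp [lampConfig, lampEvents, displacement]
  | cons p L ih =>
    obtain ⟨i, s⟩ := p
    rw [List.map_cons, List.prod_cons, ih, gammaGens_letter]
    refine SemidirectProduct.ext ?_ ?_
    · by_cases hi : i = 0
      · subst hi
        simp only [if_pos, SemidirectProduct.mul_left, lampConfig_cons_zero, one_mul]
        rfl
      · simp [lampConfig_cons_of_ne_zero _ _ _ hi, hi]
    · by_cases hi : i = 0 <;> simp [displacement, hi, ← ofAdd_add]

lemma lift_gammaGens_mk_eq_one_iff (k l m : ℕ) (L : List (Fin 3 × Bool)) :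
    FreeGroup.lift (gammaGens k l m) (FreeGroup.mk L) = 1 ↔
      (∀ x : ZMod m, lampConfig (sr 0 : DihedralGroup l) (sr 1) (k : ZMod m) L x = 1) ∧
        (displacement L : ZMod m) = 0 := by
  rw [lift_gammaGens_mk, SemidirectProduct.ext_iff, funext_iff]
  simp

section Criterion

variable {m : ℕ} {L : List (Fin 3 × Bool)}

lemma lampCount_eq_count
    (hinj : CursorInjective m L)
    {ev : ℤ × Bool} (hev : ev ∈ lampEvents L) :
    lampCount m L ev.2 (ev.1 : ZMod m) = (lampEvents L).count ev := by
  rw [lampCount, List.count_eq_countP]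
  refine List.countP_congr fun ev' hev' => ?_
  simp only [decide_eq_true_eq, beq_iff_eq]
  exact ⟨fun ⟨h2, h1⟩ => Prod.ext (hinj _ hev' _ hev h1) h2, fun h => h ▸ ⟨rfl, rfl⟩⟩

lemma forall_even_lampCount_iff
    (hinj : CursorInjective m L) :
    (∀ β x, Even (lampCount m L β x)) ↔ ∀ ev, Even ((lampEvents L).count ev) := by
  constructor
  · intro h ev
    by_cases hev : ev ∈ lampEvents L
    · rw [← lampCount_eq_count hinj hev]
      exact h _ _
    · rw [List.count_eq_zero_of_not_mem hev]
      exact Even.zero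
  · intro h β x
    rcases Nat.eq_zero_or_pos (lampCount m L β x) with h0 | hpos
    · rw [h0]
      exact Even.zero
    · obtain ⟨ev, hev, hp⟩ := List.countP_pos_iff.mp hpos
      simp only [decide_eq_true_eq] at hp
      obtain ⟨rfl, rfl⟩ := hp
      rw [lampCount_eq_count hinj hev]
      exact h ev

theorem lift_gammaGens_mk_eq_one_iff_isBalanced {k l : ℕ}
    (hinj : CursorInjective m L)
    (hdisp : (displacement L : ZMod m) = 0 ↔ displacement L = 0)
    (hlamp : ∀ x, lampConfig (sr 0 : DihedralGroup l) (sr 1) (k : ZMod m) L x = 1 ↔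
      Even (lampCount m L false x) ∧ Even (lampCount m L true (x - k))) :
    FreeGroup.lift (gammaGens k l m) (FreeGroup.mk L) = 1 ↔ IsBalanced L := by
  have hshift : (∀ x : ZMod m, Even (lampCount m L true (x - k))) ↔
      ∀ x, Even (lampCount m L true x) :=
    ⟨fun h x => by simpa using h (x + k), fun h x => h _⟩
  rw [lift_gammaGens_mk_eq_one_iff, hdisp, IsBalanced, and_comm, ← forall_even_lampCount_iff hinj,
    Bool.forall_bool]
  simp only [hlamp, forall_and, hshift]

end Criterion

theorem lift_gammaGens_mk_eq_one_iff_isBalanced_of_length_lt {k l m : ℕ}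
    (hm : m = 0 ∨ 2 * k < m) {L : List (Fin 3 × Bool)} (hk : L.length + 2 ≤ k) :
    FreeGroup.lift (gammaGens k l m) (FreeGroup.mk L) = 1 ↔ IsBalanced L := by
  have hcast : ∀ z : ℤ, z.natAbs < 2 * k → ((z : ZMod m) = 0 ↔ z = 0) := fun z hz =>
    intCast_zmod_eq_zero_iff_of_natAbs_lt (hm.imp_right (by omega))
  refine lift_gammaGens_mk_eq_one_iff_isBalanced ?_ ?_ fun x => ?_
  · intro ev hev ev' hev' h
    have := natAbs_sub_le_of_mem_lampEvents hev hev'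
    rw [← sub_eq_zero, ← Int.cast_sub, hcast _ (by omega)] at h
    exact sub_eq_zero.mp h
  · exact hcast _ (by have := natAbs_displacement_le L; omega)
  · refine lampConfig_apply_eq_one_iff_of_separated (orderOf_sr 0) (orderOf_sr 1) _ _ _ ?_
    -- an `α`-lamp and a `β`-lamp at the same place would be read `k` apart, modulo `m`
    by_contra! h
    obtain ⟨ev, hev, hαx⟩ := List.countP_pos_iff.mp (Nat.pos_of_ne_zero h.1)
    obtain ⟨ev', hev', hβx⟩ := List.countP_pos_iff.mp (Nat.pos_of_ne_zero h.2)
    simp only [decide_eq_true_eq] at hαx hβx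
    have hsub : ((ev.1 - ev'.1 - k : ℤ) : ZMod m) = 0 := by
      push_cast
      rw [hαx.2, hβx.2]
      ring
    have := natAbs_sub_le_of_mem_lampEvents hev hev'
    rw [hcast _ (by omega)] at hsub
    omega

theorem lift_gammaGens_zero_two_zero_mk_eq_one_iff_isBalanced (L : List (Fin 3 × Bool)) :
    FreeGroup.lift (gammaGens 0 2 0) (FreeGroup.mk L) = 1 ↔ IsBalanced L := by
  refine lift_gammaGens_mk_eq_one_iff_isBalanced (fun _ _ _ _ h => h)
    (intCast_zmod_eq_zero_iff_of_natAbs_lt (Or.inl rfl)) fun x => ?_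
  have hcomm : Commute (sr 0 : DihedralGroup 2) (sr 1) :=
    show sr 0 * sr 1 = sr 1 * sr 0 by decide
  rw [Nat.cast_zero, sub_zero, lampConfig_zero_apply hcomm,
    pow_mul_pow_eq_one_iff (orderOf_sr 0) (orderOf_sr 1) (by decide)]

theorem lift_diagGens_apply (k l m : ℕ → ℕ) (w : FreeGroup (Fin 3)) (s : ℕ) :
    FreeGroup.lift (diagGens k l m) w s = FreeGroup.lift (gammaGens (k s) (l s) (m s)) w := by
  have : (Pi.evalMonoidHom _ s).comp (FreeGroup.lift (diagGens k l m)) =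
      FreeGroup.lift (gammaGens (k s) (l s) (m s)) :=
    FreeGroup.ext_hom _ _ fun i => by simp [diagGens]
  exact DFunLike.congr_fun this w

theorem stmt11_general (k l m : ℕ → ℕ)
    (hm : ∀ s, m s = 0 ∨ 2 * k s < m s) (R : ℕ) (hR : ∀ s, 2 * R < k s - 1)
    (w : FreeGroup (Fin 3)) (hw : (FreeGroup.toWord w).length ≤ 2 * R) :
    FreeGroup.lift (diagGens k l m) w = 1 ↔ FreeGroup.lift (gammaGens 0 2 0) w = 1 := by
  rw [← FreeGroup.mk_toWord (x := w)]
  have hfactor : ∀ s, FreeGroup.lift (gammaGens (k s) (l s) (m s)) (FreeGroup.mk w.toWord) = 1 ↔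
      IsBalanced w.toWord := fun s =>
    lift_gammaGens_mk_eq_one_iff_isBalanced_of_length_lt (hm s) (by have := hR s; omega)
  rw [funext_iff, lift_gammaGens_zero_two_zero_mk_eq_one_iff_isBalanced]
  simp only [lift_diagGens_apply, Pi.one_apply, hfactor, forall_const]

/-- If `R < (min_s k_s − 1)/2`, a word of length at most `2R` in the three diagonal
generators represents the identity in the infinite diagonal product `Δ(k,l,m)`
iff it does in `ℤ ≀ D₂ = Γ(0,2,∞)`. -/
theorem stmt11 (k l m : ℕ → ℕ) (hl : ∀ s, l s = 0 ∨ 2 ≤ l s)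
    (hm : ∀ s, m s = 0 ∨ 2 * k s < m s) (R : ℕ) (hR : ∀ s, 2 * R < k s - 1)
    (w : FreeGroup (Fin 3)) (hw : (FreeGroup.toWord w).length ≤ 2 * R) :
    FreeGroup.lift (diagGens k l m) w = 1 ↔ FreeGroup.lift (gammaGens 0 2 0) w = 1 :=
  stmt11_general k l m hm R hR w hw
end

section
/- Let Z^{2l} = (i, f^{2l}) ∈ ℤ ≀ D_{2l} and let Z^{l} = (i, f^{l}) ∈ ℤ ≀ D_l be its image under the quotient map D_{2l} → D_l. If every lamp satisfies |f^{2l}(x)| ≤ l/2 in D_{2l}, then |Z^{2l}| = |Z^{l}|, where lengths are with respect to the corresponding switch-walk-switch generating sets (same parameter k). -/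
/-- The power `g^ε` for `ε ∈ {0,1}`. -/
def pw {G : Type*} [Group G] (g : G) (b : Bool) : G := if b then g else 1

/-- The generator `τ = (+1, 𝟙)` of `ℤ ≀ D_l`. -/
def tauG (l : ℕ) : Wr ℤ (DihedralGroup l) := ⟨1, Multiplicative.ofAdd 1⟩

/-- The generator `α = (0, a δ₀)` of `ℤ ≀ D_l`. -/
def alphaG (l : ℕ) : Wr ℤ (DihedralGroup l) := ⟨delta 0 (DihedralGroup.sr 0), 1⟩

/-- The generator `β = (0, b δ_k)` of `ℤ ≀ D_l`. -/
def betaG (k l : ℕ) : Wr ℤ (DihedralGroup l) := ⟨delta (k : ℤ) (DihedralGroup.sr 1), 1⟩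

/-- The set of switches `u ∈ {α^ε β^ε', β^ε α^ε'}`. -/
def swsU (k l : ℕ) : Set (Wr ℤ (DihedralGroup l)) :=
  {u | ∃ ε ε' : Bool,
    u = pw (alphaG l) ε * pw (betaG k l) ε' ∨ u = pw (betaG k l) ε * pw (alphaG l) ε'}

/-- The switch-walk-switch generating set: all `u₁ τ^{±1} u₂` with `u_i` switches. -/
def swsSet (k l : ℕ) : Set (Wr ℤ (DihedralGroup l)) :=
  {g | ∃ u₁ ∈ swsU k l, ∃ u₂ ∈ swsU k l,
    g = u₁ * tauG l * u₂ ∨ g = u₁ * (tauG l)⁻¹ * u₂}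

/-!
A switch-walk-switch word consists of a skeleton (the order of the two factors of each
switch and the direction of each step) and on/off exponents for its lamp events; the skeleton
fixes the displacement, and the lamp at `x` is the product of the switched-on letters among the
events at `x`. The quotient `D_{2l} → D_l` sends a word for `Z^{2l}` to a word of the same
length for `Z^l`. Conversely, read a word for `Z^l` in `D_{2l}`: its lamp `g_x` at `x` satisfies
`π g_x = π f(x)`, so `g_x = f(x)` or `g_x = f(x) r^l`. In the second case the letters at `x`
spell a word for `f(x) r^l`, whose alternating reduction has length `≥ 2l - |f(x)| ≥ 3l/2` and
so contains an alternating word for `f(x)` of length `≤ |f(x)| ≤ l/2`. Switching off the other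
events at `x`, independently at every site, gives a word of the same length for `Z^{2l}`.
-/

open DihedralGroup
open scoped List

@[simp] lemma delta_one {B L : Type*} [DecidableEq B] [Group L] (g : B) :
    delta g (1 : L) = 1 := by
  funext x
  simp [delta]

section DihedralWords

variable {n : ℕ}

def dihGen (n : ℕ) (c : Bool) : DihedralGroup n := if c then sr 0 else sr 1

def dihProd (n : ℕ) (w : List Bool) : DihedralGroup n := (w.map (dihGen n)).prod

@[simp] lemma dihProd_nil : dihProd n [] = 1 := rfl

@[simp] lemma dihProd_cons (c : Bool) (w : List Bool) :
    dihProd n (c :: w) = dihGen n c * dihProd n w :=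
  List.prod_cons

@[simp] lemma dihProd_append (w₁ w₂ : List Bool) :
    dihProd n (w₁ ++ w₂) = dihProd n w₁ * dihProd n w₂ := by
  simp [dihProd]

@[simp] lemma dihGen_mul_self (c : Bool) : dihGen n c * dihGen n c = 1 := by
  cases c <;> simp [dihGen, sr_mul_sr]

lemma dihProd_reverse (w : List Bool) : dihProd n w.reverse = (dihProd n w)⁻¹ := by
  induction w with
  | nil => simp
  | cons c w ih => simp [ih, inv_eq_of_mul_eq_one_right (dihGen_mul_self c)]

def altWord : Bool → ℕ → List Bool
  | _, 0 => []
  | c, m + 1 => c :: altWord (!c) m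

@[simp] lemma length_altWord (c : Bool) (m : ℕ) : (altWord c m).length = m := by
  induction m generalizing c <;> simp [altWord, *]

lemma altWord_sublist_altWord {m N : ℕ} (c : Bool) (h : m ≤ N) :
    altWord c m <+ altWord c N := by
  induction N generalizing m c with
  | zero => simp [Nat.le_zero.mp h, altWord]
  | succ N ih =>
    cases m with
    | zero => simp [altWord]
    | succ m => exact (ih (!c) (by omega)).cons_cons c

lemma altWord_sublist_altWord_of_lt {m N : ℕ} (c c' : Bool) (h : m < N) :
    altWord c m <+ altWord c' N := by
  obtain ⟨N, rfl⟩ : ∃ N', N = N' + 1 := ⟨N - 1, by omega⟩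
  by_cases hc : c = c'
  · exact hc ▸ altWord_sublist_altWord c h.le
  · rw [show c = !c' by cases c <;> cases c' <;> simp_all]
    exact (altWord_sublist_altWord _ (by omega)).cons c'

lemma dihProd_altWord_even (c : Bool) (p : ℕ) :
    dihProd n (altWord c (2 * p)) = r (if c then (p : ZMod n) else -p) := by
  induction p with
  | zero => simp [altWord]
  | succ p ih =>
    rw [show 2 * (p + 1) = 2 * p + 1 + 1 by ring]
    simp only [altWord, Bool.not_not, dihProd_cons, ih, ← mul_assoc]
    cases c <;> simp [dihGen, sr_mul_sr, r_mul_r]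
    ring

lemma dihProd_altWord_odd (c : Bool) (p : ℕ) :
    ∃ j, dihProd n (altWord c (2 * p + 1)) = sr j := by
  simp only [altWord, dihProd_cons, dihProd_altWord_even]
  cases c <;> simp [dihGen, sr_mul_r]

lemma exists_altWord_sublist (w : List Bool) :
    ∃ c m, altWord c m <+ w ∧ dihProd n (altWord c m) = dihProd n w := by
  induction w with
  | nil => exact ⟨true, 0, by simp [altWord]⟩
  | cons x w ih =>
    obtain ⟨c, m, hsub, hprod⟩ := ih
    cases m with
    | zero => exact ⟨x, 1, by simp [altWord], by simp_all [altWord]⟩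
    | succ m =>
      obtain rfl | rfl : c = x ∨ c = !x := by cases c <;> cases x <;> simp
      · refine ⟨!c, m, ((List.sublist_cons_self c _).trans hsub).cons c, ?_⟩
        simp [← hprod, altWord, ← mul_assoc]
      · exact ⟨x, m + 2, hsub.cons_cons x, by simp [← hprod, altWord]⟩

lemma exists_dihProd_eq [NeZero n] (t : DihedralGroup n) : ∃ w, dihProd n w = t := by
  cases t with
  | r j => exact ⟨altWord true (2 * j.val), by simp [dihProd_altWord_even]⟩
  | sr j =>
    refine ⟨altWord true (2 * (-j).val + 1), ?_⟩
    simp [altWord, dihProd_altWord_even, dihGen, sr_mul_r]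

lemma exists_dihProd_eq_length_le [NeZero n] (t : DihedralGroup n) :
    ∃ w, dihProd n w = t ∧ w.length ≤ lengthWrt (dihGens n) t := by
  have hne : {m | ∃ L : List (DihedralGroup n), (∀ x ∈ L, x ∈ dihGens n) ∧
      L.length = m ∧ L.prod = t}.Nonempty := by
    obtain ⟨w, hw⟩ := exists_dihProd_eq t
    refine ⟨w.length, w.map (dihGen n), ?_, by simp, hw⟩
    simp only [List.mem_map]
    rintro _ ⟨c, -, rfl⟩
    cases c <;> simp [dihGen, dihGens]
  obtain ⟨L, hL, hlen, hprod⟩ := Nat.sInf_mem hne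
  obtain ⟨w, rfl⟩ : L ∈ Set.range (List.map (dihGen n)) := by
    rw [Set.range_list_map]
    intro x hx
    rcases hL x hx with rfl | rfl
    exacts [⟨true, rfl⟩, ⟨false, rfl⟩]
  exact ⟨w, hprod, by simpa [lengthWrt] using hlen.le⟩

end DihedralWords

section DoubleCover

variable {l : ℕ}

lemma two_mul_le_length_of_dihProd_eq (hl : 1 ≤ l) {w : List Bool}
    (h : dihProd (2 * l) w = r (l : ZMod (2 * l))) : 2 * l ≤ w.length := by
  obtain ⟨c, m, hsub, hprod⟩ := exists_altWord_sublist (n := 2 * l) w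
  refine le_trans ?_ (by simpa using hsub.length_le)
  rw [h] at hprod
  obtain ⟨p, rfl | rfl⟩ := Nat.even_or_odd' m
  · have hp : (p : ZMod (2 * l)) = l := by
      have hl2 : ((l : ℕ) : ZMod (2 * l)) = -l := by
        rw [eq_neg_iff_add_eq_zero, ← Nat.cast_add, ← two_mul, ZMod.natCast_self]
      rw [dihProd_altWord_even, r.injEq] at hprod
      cases c
      · simp only [Bool.false_eq_true, if_false, neg_eq_iff_eq_neg] at hprod
        rw [hprod, ← hl2]
      · simpa using hprod
    rw [ZMod.natCast_eq_natCast_iff, Nat.ModEq, Nat.mod_eq_of_lt (by omega : l < 2 * l)] at hp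
    have := Nat.mod_le p (2 * l)
    omega
  · obtain ⟨j, hj⟩ := dihProd_altWord_odd (n := 2 * l) c p
    simp [hj] at hprod

/-- A word for `t r^l` with `|t| ≤ l/2` is so long that its alternating reduction contains an
alternating word for `t`. -/
lemma exists_sublist_dihProd_eq (hl : 1 ≤ l) {w : List Bool} {t : DihedralGroup (2 * l)}
    (hw : dihProd (2 * l) w = t * r (l : ZMod (2 * l)))
    (ht : 2 * lengthWrt (dihGens (2 * l)) t ≤ l) :
    ∃ u, u <+ w ∧ dihProd (2 * l) u = t := by
  have : NeZero (2 * l) := ⟨by omega⟩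
  obtain ⟨c, m, hsub, hprod⟩ := exists_altWord_sublist (n := 2 * l) w
  obtain ⟨u, hu, hulen⟩ := exists_dihProd_eq_length_le t
  obtain ⟨c', m', hsub', hprod'⟩ := exists_altWord_sublist (n := 2 * l) u
  have hlong : 2 * l ≤ m' + m := by
    simpa using two_mul_le_length_of_dihProd_eq hl (w := (altWord c' m').reverse ++ altWord c m)
      (by simp [dihProd_reverse, hprod, hprod', hu, hw])
  have hm' : m' ≤ u.length := by simpa using hsub'.length_le
  exact ⟨_, (altWord_sublist_altWord_of_lt c' c (by omega)).trans hsub, hprod'.trans hu⟩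

variable (π : DihedralGroup (2 * l) →* DihedralGroup l)
  (hπa : π (sr 0) = sr 0) (hπb : π (sr 1) = sr 1)
include hπa hπb

lemma map_dihProd (w : List Bool) : π (dihProd (2 * l) w) = dihProd l w := by
  induction w with
  | nil => simp
  | cons c w ih => cases c <;> simp [dihGen, ih, hπa, hπb]

lemma map_r [NeZero (2 * l)] (j : ZMod (2 * l)) : π (r j) = r (j.val : ZMod l) := by
  have hab (n : ℕ) : (sr 0 * sr 1 : DihedralGroup n) = r 1 := by rw [sr_mul_sr, sub_zero]
  have h1 : π (r 1) = r 1 := by rw [← hab, map_mul, hπa, hπb, hab]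
  rw [← r_one_pow, ← h1, ← map_pow, r_one_pow, ZMod.natCast_zmod_val]

lemma eq_one_or_eq_r_of_map_eq_one (hl : 1 ≤ l) {x : DihedralGroup (2 * l)} (hx : π x = 1) :
    x = 1 ∨ x = r (l : ZMod (2 * l)) := by
  have : NeZero (2 * l) := ⟨by omega⟩
  cases x with
  | r j =>
    rw [map_r π hπa hπb, one_def, r.injEq, ZMod.natCast_eq_zero_iff] at hx
    obtain ⟨q, hq⟩ := hx
    have hq' : q < 2 := by nlinarith [ZMod.val_lt j]
    rw [one_def, r.injEq, r.injEq, ← ZMod.natCast_zmod_val j, hq]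
    interval_cases q <;> simp
  | sr j =>
    have : π (sr j) = sr 0 * π (r j) := by rw [← hπa, ← map_mul, sr_mul_r, zero_add]
    rw [this, map_r π hπa hπb, sr_mul_r, one_def] at hx
    cases hx

lemma exists_sublist_dihProd_eq_of_map_eq (hl : 1 ≤ l) {w : List Bool}
    {t : DihedralGroup (2 * l)} (hw : dihProd l w = π t)
    (ht : 2 * lengthWrt (dihGens (2 * l)) t ≤ l) :
    ∃ u, u <+ w ∧ dihProd (2 * l) u = t := by
  have hker : π (t⁻¹ * dihProd (2 * l) w) = 1 := by
    rw [map_mul, map_inv, map_dihProd π hπa hπb, hw, inv_mul_cancel]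
  rcases eq_one_or_eq_r_of_map_eq_one π hπa hπb hl hker with h | h
  · exact ⟨w, List.Sublist.refl w, (inv_mul_eq_one.mp h).symm⟩
  · exact exists_sublist_dihProd_eq hl (eq_mul_of_inv_mul_eq h) ht

end DoubleCover

/-- A letter of a word sitting at `site`; it contributes to the lamp there iff `on`. -/
structure LampEvent (σ α : Type*) where
  site : σ
  letter : α
  on : Bool

namespace LampEvent

variable {σ α : Type*} [DecidableEq σ]

def skeleton (e : LampEvent σ α) : σ × α := (e.site, e.letter)

def lettersAt (x : σ) (E : List (LampEvent σ α)) : List α :=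
  (E.filter (·.site = x)).map letter

def selectedAt (x : σ) (E : List (LampEvent σ α)) : List α :=
  (E.filter (fun e => e.site = x ∧ e.on)).map letter

@[simp] lemma lettersAt_nil (x : σ) : lettersAt x ([] : List (LampEvent σ α)) = [] := rfl

@[simp] lemma selectedAt_nil (x : σ) : selectedAt x ([] : List (LampEvent σ α)) = [] := rfl

lemma lettersAt_cons (x : σ) (e : LampEvent σ α) (E : List (LampEvent σ α)) :
    lettersAt x (e :: E) = if e.site = x then e.letter :: lettersAt x E else lettersAt x E := by
  by_cases h : e.site = x <;> simp [lettersAt, h]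

lemma selectedAt_cons (x : σ) (e : LampEvent σ α) (E : List (LampEvent σ α)) :
    selectedAt x (e :: E) =
      if e.site = x ∧ e.on then e.letter :: selectedAt x E else selectedAt x E := by
  by_cases h : e.site = x ∧ e.on <;> simp [selectedAt, h]

lemma selectedAt_sublist_lettersAt (x : σ) (E : List (LampEvent σ α)) :
    selectedAt x E <+ lettersAt x E := by
  induction E with
  | nil => simp
  | cons e E ih =>
    rw [selectedAt_cons, lettersAt_cons]
    by_cases hx : e.site = x
    · by_cases hon : e.on <;> simp [hx, hon, ih, ih.cons]
    · simp [hx, ih]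

/-- Different sites own disjoint sets of events, so any family of subwords of the letters
at each site can be realised simultaneously by switching events on and off. -/
theorem exists_selectedAt_eq (E : List (LampEvent σ α)) (t : σ → List α)
    (ht : ∀ x, t x <+ lettersAt x E) :
    ∃ E' : List (LampEvent σ α), E'.map skeleton = E.map skeleton ∧
      ∀ x, selectedAt x E' = t x := by
  induction E generalizing t with
  | nil => exact ⟨[], rfl, fun x => (List.sublist_nil.mp (ht x)).symm⟩
  | cons e E ih =>
    obtain ⟨b, t', hsub, hte⟩ : ∃ (b : Bool) (t' : List α), t' <+ lettersAt e.site E ∧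
        t e.site = if b then e.letter :: t' else t' := by
      have := ht e.site
      rw [lettersAt_cons, if_pos rfl, List.sublist_cons_iff] at this
      rcases this with h | ⟨t', h, hsub⟩
      exacts [⟨false, _, h, rfl⟩, ⟨true, t', hsub, h⟩]
    obtain ⟨E', hskel, hsel⟩ := ih (Function.update t e.site t') fun x => by
      by_cases hx : x = e.site
      · subst hx; simpa using hsub
      · simpa [hx, lettersAt_cons, Ne.symm hx] using ht x
    refine ⟨⟨e.site, e.letter, b⟩ :: E', by simp [hskel, skeleton], fun x => ?_⟩
    by_cases hx : x = e.site
    · subst hx; cases b <;> simp_all [selectedAt_cons]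
    · simp [selectedAt_cons, hsel, hx, Ne.symm hx]

end LampEvent

namespace SwitchWalkSwitch

open SemidirectProduct LampEvent

variable {k n : ℕ}

def eventVal (n : ℕ) (e : LampEvent ℤ Bool) : Wr ℤ (DihedralGroup n) :=
  inl (delta e.site (pw (dihGen n e.letter) e.on))

def lampConfig (n : ℕ) (E : List (LampEvent ℤ Bool)) : ℤ → DihedralGroup n :=
  fun x => dihProd n (selectedAt x E)

lemma prod_map_eventVal (E : List (LampEvent ℤ Bool)) :
    (E.map (eventVal n)).prod = inl (lampConfig n E) := by
  induction E with
  | nil => exact (map_one inl).symm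
  | cons e E ih =>
    rw [List.map_cons, List.prod_cons, ih, eventVal, ← map_mul]
    congr 1
    funext x
    by_cases hx : e.site = x
    · cases h : e.on <;> simp [lampConfig, selectedAt_cons, delta, pw, hx, h]
    · simp [lampConfig, selectedAt_cons, delta, pw, hx, Ne.symm hx]

lemma conj_eventVal (p : ℤ) (e : LampEvent ℤ Bool) :
    inr (Multiplicative.ofAdd p) * eventVal n e * (inr (Multiplicative.ofAdd p))⁻¹ =
      eventVal n ⟨e.site + p, e.letter, e.on⟩ := by
  rw [← map_inv, eventVal, eventVal, ← inl_aut]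
  congr 1
  funext x
  simp [shiftHom, shiftEquiv, delta, sub_eq_iff_eq_add]

structure Switch where
  aFirst : Bool
  ea : Bool
  eb : Bool

namespace Switch

def val (k n : ℕ) (s : Switch) : Wr ℤ (DihedralGroup n) :=
  if s.aFirst then pw (alphaG n) s.ea * pw (betaG k n) s.eb
  else pw (betaG k n) s.eb * pw (alphaG n) s.ea

def events (k : ℕ) (p : ℤ) (s : Switch) : List (LampEvent ℤ Bool) :=
  if s.aFirst then [⟨p, true, s.ea⟩, ⟨k + p, false, s.eb⟩]
  else [⟨k + p, false, s.eb⟩, ⟨p, true, s.ea⟩]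

lemma mem_swsU_iff {u : Wr ℤ (DihedralGroup n)} :
    u ∈ swsU k n ↔ ∃ s : Switch, s.val k n = u := by
  constructor
  · rintro ⟨ε, ε', rfl | rfl⟩
    exacts [⟨⟨true, ε, ε'⟩, rfl⟩, ⟨⟨false, ε', ε⟩, rfl⟩]
  · rintro ⟨⟨_ | _, ea, eb⟩, rfl⟩
    exacts [⟨eb, ea, Or.inr rfl⟩, ⟨ea, eb, Or.inl rfl⟩]

lemma conj_val (p : ℤ) (s : Switch) :
    inr (Multiplicative.ofAdd p) * s.val k n * (inr (Multiplicative.ofAdd p))⁻¹ =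
      ((s.events k p).map (eventVal n)).prod := by
  have hα (ε : Bool) : pw (alphaG n) ε = eventVal n ⟨0, true, ε⟩ := by
    cases ε <;> simp [pw, alphaG, eventVal, dihGen]
  have hβ (ε : Bool) : pw (betaG k n) ε = eventVal n ⟨k, false, ε⟩ := by
    cases ε <;> simp [pw, betaG, eventVal, dihGen]
  unfold val events
  cases s.aFirst <;> simp [hα, hβ, ← conj_mul, conj_eventVal]

lemma exists_events_eq {p : ℤ} (s : Switch) {E : List (LampEvent ℤ Bool)}
    (hE : E.map skeleton = (s.events k p).map skeleton) : ∃ s' : Switch, s'.events k p = E := by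
  obtain ⟨⟨y₁, c₁, b₁⟩, ⟨y₂, c₂, b₂⟩, rfl⟩ := List.length_eq_two.mp
    (by simpa [events, apply_ite List.length] using congrArg List.length hE)
  obtain ⟨_ | _, ea, eb⟩ := s <;> simp [events, skeleton] at hE <;>
    obtain ⟨⟨rfl, rfl⟩, rfl, rfl⟩ := hE
  exacts [⟨⟨false, b₂, b₁⟩, rfl⟩, ⟨⟨true, b₁, b₂⟩, rfl⟩]

end Switch

structure Letter where
  s₁ : Switch
  forward : Bool
  s₂ : Switch

namespace Letter

def disp (c : Letter) : ℤ := if c.forward then 1 else -1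

def val (k n : ℕ) (c : Letter) : Wr ℤ (DihedralGroup n) :=
  c.s₁.val k n * inr (Multiplicative.ofAdd c.disp) * c.s₂.val k n

def events (k : ℕ) (p : ℤ) (c : Letter) : List (LampEvent ℤ Bool) :=
  c.s₁.events k p ++ c.s₂.events k (p + c.disp)

lemma mem_swsSet_iff {g : Wr ℤ (DihedralGroup n)} :
    g ∈ swsSet k n ↔ ∃ c : Letter, c.val k n = g := by
  have hτ : tauG n = inr (Multiplicative.ofAdd 1) := rfl
  have hτinv : (tauG n)⁻¹ = inr (Multiplicative.ofAdd (-1)) := by rw [hτ, ← map_inv]; rfl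
  simp only [swsSet, Switch.mem_swsU_iff, Set.mem_ofPred_eq]
  constructor
  · rintro ⟨_, ⟨s₁, rfl⟩, _, ⟨s₂, rfl⟩, rfl | rfl⟩
    exacts [⟨⟨s₁, true, s₂⟩, by simp [val, disp, hτ]⟩,
      ⟨⟨s₁, false, s₂⟩, by simp [val, disp, hτinv]⟩]
  · rintro ⟨⟨s₁, _ | _, s₂⟩, rfl⟩
    exacts [⟨_, ⟨s₁, rfl⟩, _, ⟨s₂, rfl⟩, Or.inr (by simp [val, disp, hτinv])⟩,
      ⟨_, ⟨s₁, rfl⟩, _, ⟨s₂, rfl⟩, Or.inl (by simp [val, disp, hτ])⟩]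

lemma conj_val (p : ℤ) (c : Letter) :
    inr (Multiplicative.ofAdd p) * c.val k n * (inr (Multiplicative.ofAdd (p + c.disp)))⁻¹ =
      ((c.events k p).map (eventVal n)).prod := by
  rw [events, List.map_append, List.prod_append, ← Switch.conj_val, ← Switch.conj_val, val,
    ofAdd_add, map_mul]
  group

lemma exists_events_eq {p : ℤ} (c : Letter) {E : List (LampEvent ℤ Bool)}
    (hE : E.map skeleton = (c.events k p).map skeleton) :
    ∃ c' : Letter, c'.disp = c.disp ∧ c'.events k p = E := by
  rw [events, List.map_append, List.map_eq_append_iff] at hE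
  obtain ⟨E₁, E₂, rfl, h₁, h₂⟩ := hE
  obtain ⟨s₁, rfl⟩ := c.s₁.exists_events_eq h₁
  obtain ⟨s₂, rfl⟩ := c.s₂.exists_events_eq h₂
  exact ⟨⟨s₁, c.forward, s₂⟩, rfl, rfl⟩

end Letter

def wordEvents (k : ℕ) : ℤ → List Letter → List (LampEvent ℤ Bool)
  | _, [] => []
  | p, c :: cs => c.events k p ++ wordEvents k (p + c.disp) cs

lemma conj_prod_val (p : ℤ) (cs : List Letter) :
    inr (Multiplicative.ofAdd p) * (cs.map (Letter.val k n)).prod *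
        (inr (Multiplicative.ofAdd (p + (cs.map Letter.disp).sum)))⁻¹ =
      ((wordEvents k p cs).map (eventVal n)).prod := by
  induction cs generalizing p with
  | nil => simp [wordEvents]
  | cons c cs ih =>
    rw [wordEvents, List.map_append, List.prod_append, ← ih, ← Letter.conj_val]
    simp only [List.map_cons, List.prod_cons, List.sum_cons, ← add_assoc]
    group

lemma prod_map_val (cs : List Letter) :
    (cs.map (Letter.val k n)).prod =
      ⟨lampConfig n (wordEvents k 0 cs), Multiplicative.ofAdd (cs.map Letter.disp).sum⟩ := by
  rw [mk_eq_inl_mul_inr, ← prod_map_eventVal, ← conj_prod_val]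
  simp

lemma exists_wordEvents_eq (p : ℤ) (cs : List Letter) {E : List (LampEvent ℤ Bool)}
    (hE : E.map skeleton = (wordEvents k p cs).map skeleton) :
    ∃ cs' : List Letter, cs'.map Letter.disp = cs.map Letter.disp ∧ wordEvents k p cs' = E := by
  induction cs generalizing p E with
  | nil => exact ⟨[], rfl, List.map_eq_nil_iff.mp hE |>.symm⟩
  | cons c cs ih =>
    rw [wordEvents, List.map_append, List.map_eq_append_iff] at hE
    obtain ⟨E₁, E₂, rfl, h₁, h₂⟩ := hE
    obtain ⟨c', hdisp, rfl⟩ := c.exists_events_eq h₁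
    obtain ⟨cs', hdisps, rfl⟩ := ih (p + c.disp) h₂
    exact ⟨c' :: cs', by simp [hdisp, hdisps], by rw [wordEvents, hdisp]⟩

lemma exists_word_iff (m : ℕ) (f : ℤ → DihedralGroup n) (i : ℤ) :
    (∃ L : List (Wr ℤ (DihedralGroup n)), (∀ x ∈ L, x ∈ swsSet k n) ∧ L.length = m ∧
        L.prod = ⟨f, Multiplicative.ofAdd i⟩) ↔
      ∃ cs : List Letter, cs.length = m ∧ lampConfig n (wordEvents k 0 cs) = f ∧
        (cs.map Letter.disp).sum = i := by
  constructor
  · rintro ⟨L, hL, rfl, hprod⟩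
    obtain ⟨cs, rfl⟩ : L ∈ Set.range (List.map (Letter.val k n)) := by
      rw [Set.range_list_map]
      exact fun x hx => Letter.mem_swsSet_iff.mp (hL x hx)
    rw [prod_map_val, SemidirectProduct.ext_iff] at hprod
    exact ⟨cs, by simp, hprod.1, Multiplicative.ofAdd.injective hprod.2⟩
  · rintro ⟨cs, rfl, rfl, rfl⟩
    refine ⟨cs.map (Letter.val k n), ?_, by simp, prod_map_val cs⟩
    simp only [List.mem_map]
    rintro _ ⟨c, -, rfl⟩
    exact Letter.mem_swsSet_iff.mpr ⟨c, rfl⟩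

lemma exists_lift {k l : ℕ} (hl : 1 ≤ l) (π : DihedralGroup (2 * l) →* DihedralGroup l)
    (hπa : π (sr 0) = sr 0) (hπb : π (sr 1) = sr 1) {f : ℤ → DihedralGroup (2 * l)}
    (hbound : ∀ x, 2 * lengthWrt (dihGens (2 * l)) (f x) ≤ l) {cs : List Letter}
    (hcs : lampConfig l (wordEvents k 0 cs) = fun x => π (f x)) :
    ∃ cs' : List Letter, cs'.map Letter.disp = cs.map Letter.disp ∧
      lampConfig (2 * l) (wordEvents k 0 cs') = f := by
  set E := wordEvents k 0 cs
  choose u hu hprod using fun x => exists_sublist_dihProd_eq_of_map_eq π hπa hπb hl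
    (w := selectedAt x E) (congrFun hcs x) (hbound x)
  obtain ⟨E', hskel, hsel⟩ := exists_selectedAt_eq E u fun x =>
    (hu x).trans (selectedAt_sublist_lettersAt x E)
  obtain ⟨cs', hdisp, rfl⟩ := exists_wordEvents_eq 0 cs hskel
  exact ⟨cs', hdisp, funext fun x => by rw [lampConfig, hsel, hprod]⟩

end SwitchWalkSwitch

theorem stmt16_general (k l : ℕ) (hl : 1 ≤ l)
    (π : DihedralGroup (2 * l) →* DihedralGroup l)
    (hπa : π (DihedralGroup.sr 0) = DihedralGroup.sr 0)
    (hπb : π (DihedralGroup.sr 1) = DihedralGroup.sr 1)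
    (i : ℤ) (f : ℤ → DihedralGroup (2 * l))
    (hbound : ∀ x : ℤ, 2 * lengthWrt (dihGens (2 * l)) (f x) ≤ l) :
    lengthWrt (swsSet k (2 * l)) (⟨f, Multiplicative.ofAdd i⟩ : Wr ℤ (DihedralGroup (2 * l))) =
      lengthWrt (swsSet k l)
        (⟨fun x => π (f x), Multiplicative.ofAdd i⟩ : Wr ℤ (DihedralGroup l)) := by
  unfold lengthWrt
  congr 1
  ext m
  simp only [Set.mem_ofPred_eq, SwitchWalkSwitch.exists_word_iff]
  constructor
  · rintro ⟨cs, hlen, rfl, hi⟩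
    refine ⟨cs, hlen, funext fun x => ?_, hi⟩
    exact (map_dihProd π hπa hπb _).symm
  · rintro ⟨cs, rfl, hcs, rfl⟩
    obtain ⟨cs', hdisp, hf⟩ := SwitchWalkSwitch.exists_lift hl π hπa hπb hbound hcs
    exact ⟨cs', by simpa using congrArg List.length hdisp, hf, by rw [hdisp]⟩

/-- If `Z^{2l} = (i, f) ∈ ℤ ≀ D_{2l}` has all lamps of length `|f(x)| ≤ l/2`, and
`Z^l = (i, π ∘ f)` is its image under the quotient map `π : D_{2l} → D_l` (the unique
homomorphism with `π(a) = a`, `π(b) = b`), then `|Z^{2l}| = |Z^l|` for the respective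
switch-walk-switch word lengths with the same shift parameter `k`. -/
theorem stmt16 (k l : ℕ) (hl : 1 ≤ l)
    (π : DihedralGroup (2 * l) →* DihedralGroup l)
    (hπa : π (DihedralGroup.sr 0) = DihedralGroup.sr 0)
    (hπb : π (DihedralGroup.sr 1) = DihedralGroup.sr 1)
    (i : ℤ) (f : ℤ → DihedralGroup (2 * l))
    (hf : {x : ℤ | f x ≠ 1}.Finite)
    (hbound : ∀ x : ℤ, 2 * lengthWrt (dihGens (2 * l)) (f x) ≤ l) :
    lengthWrt (swsSet k (2 * l)) (⟨f, Multiplicative.ofAdd i⟩ : Wr ℤ (DihedralGroup (2 * l))) =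
      lengthWrt (swsSet k l)
        (⟨fun x => π (f x), Multiplicative.ofAdd i⟩ : Wr ℤ (DihedralGroup l)) :=
  stmt16_general k l hl π hπa hπb i f hbound
end
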